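/- arXiv:1904.00590 — 13 statements merged into one kernel-verified Lean document; each statement's English description precedes it below -/
import Mathlib

section
/- The set H of pairs (λ, α) with λ a nonzero real number and α a real number greater than 1 such that ‖λ α^n‖ → 0 as n → ∞ is countable. -/
/-! Write `λ αⁿ = Fₙ + eₙ` with `Fₙ = round (λ αⁿ)`, so that `eₙ → 0` on the Hardy set. Then
`Fₙ₊₁² - Fₙ Fₙ₊₂ = λ αⁿ (α² eₙ - 2α eₙ₊₁ + eₙ₊₂) + (eₙ₊₁² - eₙ eₙ₊₂) = o(Fₙ)`, so eventually
`Fₙ₊₂ = round (Fₙ₊₁² / Fₙ)`: from some `N` on, the integer sequence is determined by `F_N` and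
`F_{N+1}`. Its tail in turn determines the pair, as `α = lim Fₙ₊₁ / Fₙ` and `λ = lim Fₙ / αⁿ`.
So the Hardy set is a countable union of sets injecting into `ℤ × ℤ`. -/

open Filter Topology

theorem round_eq_of_abs_sub_lt_half {α : Type*} [Field α] [LinearOrder α] [IsStrictOrderedRing α]
    [FloorRing α] {x : α} {m : ℤ} (h : |x - m| < 1 / 2) : round x = m :=
  round_eq_iff.2 ⟨by linarith [abs_lt.1 h], by linarith [abs_lt.1 h]⟩

theorem eq_of_recurrence {α : Type*} {f : α → α → α} {s t : ℕ → α} {N : ℕ}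
    (hs : ∀ n ≥ N, s (n + 2) = f (s n) (s (n + 1)))
    (ht : ∀ n ≥ N, t (n + 2) = f (t n) (t (n + 1)))
    (h₀ : s N = t N) (h₁ : s (N + 1) = t (N + 1)) : ∀ n ≥ N, s n = t n := by
  have key : ∀ n ≥ N, s n = t n ∧ s (n + 1) = t (n + 1) := by
    intro n hn
    induction n, hn using Nat.le_induction with
    | base => exact ⟨h₀, h₁⟩
    | succ n hn ih => exact ⟨ih.2, by rw [hs n hn, ht n hn, ih.1, ih.2]⟩
  exact fun n hn => (key n hn).1

section

variable {l a : ℝ}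

theorem tendsto_round_mul_pow_div_pow (ha : 1 < a) :
    Tendsto (fun n : ℕ => (round (l * a ^ n) : ℝ) / a ^ n) atTop (𝓝 l) := by
  have hinv : Tendsto (fun n : ℕ => (1 / 2) * (a ^ n)⁻¹) atTop (𝓝 0) := by
    simpa using (tendsto_inv_atTop_zero.comp (tendsto_pow_atTop_atTop_of_one_lt ha)).const_mul
      (1 / 2 : ℝ)
  refine tendsto_iff_norm_sub_tendsto_zero.2 <|
    squeeze_zero (fun _ => norm_nonneg _) (fun n => ?_) hinv
  have hpos : 0 < a ^ n := pow_pos (by linarith) n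
  have hdiff : (round (l * a ^ n) : ℝ) / a ^ n - l =
      -((l * a ^ n - round (l * a ^ n)) * (a ^ n)⁻¹) := by
    field_simp
    ring
  rw [Real.norm_eq_abs, hdiff, abs_neg, abs_mul, abs_inv, abs_of_pos hpos]
  exact mul_le_mul_of_nonneg_right (abs_sub_round _) (by positivity)

theorem tendsto_round_mul_pow_succ_div (hl : l ≠ 0) (ha : 1 < a) :
    Tendsto (fun n : ℕ => (round (l * a ^ (n + 1)) : ℝ) / round (l * a ^ n)) atTop (𝓝 a) := by
  have hu := tendsto_round_mul_pow_div_pow (l := l) ha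
  have hratio := ((hu.comp (tendsto_add_atTop_nat 1)).mul_const a).div hu hl
  rw [mul_div_cancel_left₀ _ hl] at hratio
  refine hratio.congr' ?_
  filter_upwards [hu.eventually_ne hl] with n hn
  have hpos : a ^ n ≠ 0 := pow_ne_zero n (by linarith)
  have hF : (round (l * a ^ n) : ℝ) ≠ 0 := fun h => hn (by rw [h, zero_div])
  simp only [Pi.div_apply, Function.comp_apply]
  field_simp
  ring

theorem eq_of_round_mul_pow_eventuallyEq {l' a' : ℝ} (hl : l ≠ 0) (ha : 1 < a) (hl' : l' ≠ 0)
    (ha' : 1 < a') (h : (fun n : ℕ => round (l * a ^ n)) =ᶠ[atTop] fun n => round (l' * a' ^ n)) :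
    l = l' ∧ a = a' := by
  have hcast : (fun n : ℕ => (round (l * a ^ n) : ℝ)) =ᶠ[atTop]
      fun n => (round (l' * a' ^ n) : ℝ) := h.fun_comp _
  have hcast₁ := (tendsto_add_atTop_nat 1).eventually hcast
  have haa : a = a' := by
    refine tendsto_nhds_unique (tendsto_round_mul_pow_succ_div hl ha)
      ((tendsto_round_mul_pow_succ_div hl' ha').congr' ?_)
    filter_upwards [hcast, hcast₁] with n hn hn₁
    rw [hn, hn₁]
  subst haa
  refine ⟨tendsto_nhds_unique (tendsto_round_mul_pow_div_pow ha)
    ((tendsto_round_mul_pow_div_pow ha).congr' ?_), rfl⟩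
  filter_upwards [hcast] with n hn
  rw [hn]

theorem tendsto_round_sq_div_sub_round (hl : l ≠ 0) (ha : 1 < a)
    (h : Tendsto (fun n : ℕ => |l * a ^ n - round (l * a ^ n)|) atTop (𝓝 0)) :
    Tendsto (fun n : ℕ => (round (l * a ^ (n + 1)) : ℝ) ^ 2 / round (l * a ^ n)
      - round (l * a ^ (n + 2))) atTop (𝓝 0) := by
  set F : ℕ → ℝ := fun n => round (l * a ^ n)
  set e : ℕ → ℝ := fun n => l * a ^ n - F n
  have he : Tendsto e atTop (𝓝 0) := (tendsto_zero_iff_abs_tendsto_zero e).2 h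
  have he₁ := he.comp (tendsto_add_atTop_nat 1)
  have he₂ := he.comp (tendsto_add_atTop_nat 2)
  have hu : Tendsto (fun n => F n / a ^ n) atTop (𝓝 l) := tendsto_round_mul_pow_div_pow ha
  have hinv : Tendsto (fun n : ℕ => (a ^ n)⁻¹) atTop (𝓝 0) :=
    tendsto_inv_atTop_zero.comp (tendsto_pow_atTop_atTop_of_one_lt ha)
  have hlim : Tendsto (fun n => l / (F n / a ^ n) * (a ^ 2 * e n - 2 * a * e (n + 1) + e (n + 2))
      + (e (n + 1) ^ 2 - e n * e (n + 2)) * (a ^ n)⁻¹ / (F n / a ^ n)) atTop (𝓝 0) := by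
    simpa using ((tendsto_const_nhds (x := l)).div hu hl).mul
      (((he.const_mul (a ^ 2)).sub (he₁.const_mul (2 * a))).add he₂) |>.add
      ((((he₁.pow 2).sub (he.mul he₂)).mul hinv).div hu hl)
  refine hlim.congr' ?_
  filter_upwards [hu.eventually_ne hl] with n hn
  have hpos : a ^ n ≠ 0 := pow_ne_zero n (by linarith)
  have hF : F n ≠ 0 := fun h => hn (by rw [h, zero_div])
  change _ = F (n + 1) ^ 2 / F n - F (n + 2)
  simp only [e]
  field_simp
  ring

theorem eventually_round_mul_pow_add_two (hl : l ≠ 0) (ha : 1 < a)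
    (h : Tendsto (fun n : ℕ => |l * a ^ n - round (l * a ^ n)|) atTop (𝓝 0)) :
    ∀ᶠ n in atTop, round (l * a ^ (n + 2)) =
      round ((round (l * a ^ (n + 1)) : ℝ) ^ 2 / round (l * a ^ n)) := by
  filter_upwards [(tendsto_round_sq_div_sub_round hl ha h).eventually
    (Metric.ball_mem_nhds 0 one_half_pos)] with n hn
  rw [Real.dist_eq, sub_zero] at hn
  exact (round_eq_of_abs_sub_lt_half hn).symm

end

/-- The Hardy set `H = {(λ, α) : λ ≠ 0, α > 1, ‖λ αⁿ‖ → 0}` is countable. -/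
theorem hardy_set_countable :
    Set.Countable {p : ℝ × ℝ | p.1 ≠ 0 ∧ 1 < p.2 ∧
      Tendsto (fun n : ℕ => |p.1 * p.2 ^ n - round (p.1 * p.2 ^ n)|) atTop (nhds 0)} := by
  let F (p : ℝ × ℝ) (n : ℕ) : ℤ := round (p.1 * p.2 ^ n)
  let step (x y : ℤ) : ℤ := round ((y : ℝ) ^ 2 / x)
  let IsRecurrentFrom (N : ℕ) (p : ℝ × ℝ) : Prop :=
    p.1 ≠ 0 ∧ 1 < p.2 ∧ ∀ n ≥ N, F p (n + 2) = step (F p n) (F p (n + 1))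
  refine Set.Countable.mono (s₂ := ⋃ N, {p | IsRecurrentFrom N p}) ?_
    (Set.countable_iUnion fun N => ?_)
  · rintro p ⟨hl, ha, h⟩
    obtain ⟨N, hN⟩ := eventually_atTop.1 (eventually_round_mul_pow_add_two hl ha h)
    exact Set.mem_iUnion.2 ⟨N, hl, ha, hN⟩
  refine Set.countable_of_injective_of_countable_image (f := fun p => (F p N, F p (N + 1)))
    ?_ (Set.to_countable _)
  rintro ⟨l, a⟩ ⟨hl, ha, hrec⟩ ⟨l', a'⟩ ⟨hl', ha', hrec'⟩ hF
  obtain ⟨h₀, h₁⟩ := Prod.ext_iff.1 hF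
  obtain ⟨rfl, rfl⟩ := eq_of_round_mul_pow_eventuallyEq hl ha hl' ha'
    (eventually_atTop.2 ⟨N, eq_of_recurrence hrec hrec' h₀ h₁⟩)
  rfl
end

section
/- The set M of pairs (λ, α) with λ a nonzero real number and α > 1 such that there exists 0 < c < 1 with ‖λ α^n‖ < c^n for infinitely many natural numbers n, is uncountable. -/
/-!
For a fixed `α > 1` the points `m / αⁿ` (`m ∈ ℤ`, `n ≥ N`) are dense, so the reals `λ` with
`λ αⁿ` within `cⁿ` of an integer for infinitely many `n` contain a dense Gδ set. By Baire's
theorem such a set is not countable, since the complement of a countable subset of `ℝ` is residual.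
-/

open Filter Set Topology

theorem Set.Countable.compl_mem_residual {X : Type*} [TopologicalSpace X] [T1Space X]
    [∀ x : X, (𝓝[≠] x).NeBot] {s : Set X} (hs : s.Countable) : sᶜ ∈ residual X := by
  rw [← biUnion_of_singleton s, compl_iUnion₂]
  exact (countable_bInter_mem hs).2 fun x _ =>
    residual_of_dense_open isOpen_compl_singleton (dense_compl_singleton x)

theorem Set.Countable.notMem_residual {X : Type*} [TopologicalSpace X] [T1Space X]
    [∀ x : X, (𝓝[≠] x).NeBot] [BaireSpace X] [Nonempty X] {s : Set X} (hs : s.Countable) :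
    s ∉ residual X := fun h => by
  simpa using (dense_of_mem_residual (inter_mem h hs.compl_mem_residual)).nonempty

theorem dense_setOf_exists_ge_near_int {a : ℕ → ℝ} (ha : Tendsto a atTop atTop) {ε : ℕ → ℝ}
    (hε : ∀ n, 0 < ε n) (N : ℕ) :
    Dense {x : ℝ | ∃ n ≥ N, ∃ m : ℤ, |x * a n - m| < ε n} := by
  refine Metric.dense_iff.2 fun x r hr => ?_
  obtain ⟨n, han, hnN⟩ := ((ha.eventually_gt_atTop r⁻¹).and (eventually_ge_atTop N)).exists
  have ha0 : 0 < a n := (inv_pos.2 hr).trans han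
  refine ⟨round (x * a n) / a n, ?_, n, hnN, round (x * a n), by simpa [ha0.ne'] using hε n⟩
  rw [Metric.mem_ball, Real.dist_eq, div_sub' ha0.ne', abs_div, abs_of_pos ha0,
    div_lt_iff₀ ha0, abs_sub_comm, mul_comm]
  calc |x * a n - round (x * a n)| ≤ 1 / 2 := abs_sub_round _
    _ < 1 := by norm_num
    _ < r * a n := by rwa [← inv_lt_iff_one_lt_mul₀' hr]

theorem eventually_residual_frequently_near_int {a : ℕ → ℝ} (ha : Tendsto a atTop atTop)
    {ε : ℕ → ℝ} (hε : ∀ n, 0 < ε n) :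
    ∀ᶠ x in residual ℝ, ∃ᶠ n in atTop, ∃ m : ℤ, |x * a n - m| < ε n := by
  have hopen (N : ℕ) : IsOpen {x : ℝ | ∃ n ≥ N, ∃ m : ℤ, |x * a n - m| < ε n} := by
    rw [show {x : ℝ | ∃ n ≥ N, ∃ m : ℤ, |x * a n - m| < ε n} =
        ⋃ n ∈ Ici N, ⋃ m : ℤ, {x | |x * a n - m| < ε n} by ext; simp]
    exact isOpen_biUnion fun n _ => isOpen_iUnion fun m =>
      isOpen_lt (by fun_prop) continuous_const
  filter_upwards [countable_iInter_mem.2 fun N =>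
    residual_of_dense_open (hopen N) (dense_setOf_exists_ge_near_int ha hε N)] with x hx
  exact frequently_atTop.2 fun N => mem_iInter.1 hx N

theorem eventually_residual_ne_zero_and_infinite_near_int {α c : ℝ} (hα : 1 < α) (hc : 0 < c) :
    ∀ᶠ x in residual ℝ, x ≠ 0 ∧ {n : ℕ | |x * α ^ n - round (x * α ^ n)| < c ^ n}.Infinite := by
  filter_upwards [(countable_singleton (0 : ℝ)).compl_mem_residual,
    eventually_residual_frequently_near_int (tendsto_pow_atTop_atTop_of_one_lt hα)
      (fun n => pow_pos hc n)] with x hx0 hx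
  refine ⟨hx0, Nat.frequently_atTop_iff_infinite.1 (hx.mono fun n ⟨m, hm⟩ => ?_)⟩
  exact (round_le _ m).trans_lt hm

/-- The Mahler set `M = {(λ, α) : λ ≠ 0, α > 1, ∃ 0 < c < 1 with ‖λ αⁿ‖ < cⁿ for
infinitely many n}` is uncountable. -/
theorem mahler_set_uncountable :
    ¬ Set.Countable {p : ℝ × ℝ | p.1 ≠ 0 ∧ 1 < p.2 ∧
      ∃ c : ℝ, 0 < c ∧ c < 1 ∧
        {n : ℕ | |p.1 * p.2 ^ n - round (p.1 * p.2 ^ n)| < c ^ n}.Infinite} := by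
  intro hM
  have hfiber := hM.preimage (f := fun x : ℝ => (x, (2 : ℝ))) fun x y h => congrArg Prod.fst h
  refine hfiber.notMem_residual ?_
  filter_upwards [eventually_residual_ne_zero_and_infinite_near_int one_lt_two one_half_pos]
    with x ⟨hx0, hx⟩
  exact ⟨hx0, one_lt_two, 1 / 2, one_half_pos, one_half_lt_one, hx⟩
end

section
/- Let λ = Σ_{n=1}^∞ 1/10^{n!} be the Liouville number. Then there exists 0 < c < 1 such that ‖λ · 10^n‖ < c^n for infinitely many natural numbers n. Moreover, λ is transcendental. -/
/-!
Writing `λ = L - 1/10`, where `L = Σ_{n ≥ 0} 10^{-n!}` is Mathlib's Liouville number, the first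
`k + 1` terms of `L` become integers after multiplication by `10^{k!}`, and so does `1/10`.
What is left is the tail of `L` times `10^{k!}`, which is below `10^{k!}/10^{k·k!} ≤ 10^{-k!}`
for `k ≥ 2`; hence `‖λ·10^n‖ < 10^{-n}` along `n = k!`. Since `λ` differs from `L` by a
rational, it is itself a Liouville number, hence transcendental.
-/

open scoped Nat

namespace LiouvilleNumber

theorem tsum_one_div_pow_factorial_succ {m : ℝ} (hm : 1 < m) :
    ∑' i : ℕ, 1 / m ^ (i + 1)! = liouvilleNumber m - 1 / m := by
  rw [liouvilleNumber, (LiouvilleNumber.summable hm).tsum_eq_zero_add]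
  simp

theorem exists_intCast_sub_eq_remainder_mul {m : ℕ} (hm : 1 < m) (k : ℕ) :
    ∃ z : ℤ, liouvilleNumber m * (m : ℝ) ^ (k !) - z = remainder m k * (m : ℝ) ^ k ! := by
  obtain ⟨p, hp⟩ := partialSum_eq_rat (zero_lt_one.trans hm) k
  refine ⟨p, ?_⟩
  have hmk : (m : ℝ) ^ k ! ≠ 0 := by positivity
  rw [← partialSum_add_remainder (mod_cast hm : (1 : ℝ) < m) k, hp]
  push_cast
  field_simp
  ring

theorem remainder_mul_pow_factorial_lt {m : ℝ} (hm : 2 ≤ m) {k : ℕ}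
    (hk : 2 ≤ k) : remainder m k * m ^ k ! < (1 / m) ^ k ! := by
  have hmk : 1 ≤ m ^ k ! := one_le_pow₀ (by linarith)
  calc remainder m k * m ^ k ! < 1 / (m ^ k !) ^ k * m ^ k ! := by
        gcongr; exact remainder_lt k hm
    _ ≤ 1 / (m ^ k !) ^ 2 * m ^ k ! := by gcongr
    _ = (1 / m) ^ k ! := by
        rw [one_div_pow]; field_simp

theorem abs_mul_pow_factorial_sub_round_lt {m : ℕ} (hm : 2 ≤ m) {k : ℕ} (hk : 2 ≤ k) :
    |(liouvilleNumber m - 1 / m) * (m : ℝ) ^ (k !) -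
      round ((liouvilleNumber m - 1 / m) * (m : ℝ) ^ k !)| < (1 / m) ^ k ! := by
  obtain ⟨z, hz⟩ := exists_intCast_sub_eq_remainder_mul hm k
  have hshift : (liouvilleNumber m - 1 / m) * (m : ℝ) ^ k ! =
      liouvilleNumber m * (m : ℝ) ^ (k !) - (m : ℝ) ^ ((k !) - 1) := by
    have hm0 : (m : ℝ) ≠ 0 := by positivity
    rw [← mul_pow_sub_one k.factorial_ne_zero (m : ℝ)]
    field_simp
  calc _ ≤ |_ - ((z - m ^ ((k !) - 1) : ℤ) : ℝ)| := round_le _ _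
    _ = remainder m k * (m : ℝ) ^ k ! := by
        have := remainder_pos (mod_cast hm : (1 : ℝ) < m) k
        push_cast
        rw [hshift, sub_sub_sub_cancel_right, hz, abs_of_pos (by positivity)]
    _ < (1 / m) ^ k ! := remainder_mul_pow_factorial_lt (mod_cast hm) hk

theorem transcendental_sub_one_div {m : ℕ} (hm : 2 ≤ m) :
    Transcendental ℚ (liouvilleNumber m - 1 / m) := by
  have hliouville : Liouville (liouvilleNumber m - 1 / m) := by
    rw [← forall_liouvilleWith_iff]
    intro p
    simpa using ((liouville_liouvilleNumber hm).liouvilleWith p).sub_rat (1 / m)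
  exact fun h => hliouville.transcendental ((IsFractionRing.isAlgebraic_iff ℤ ℚ ℝ).mpr h)

end LiouvilleNumber

open LiouvilleNumber

/-- For the Liouville number `λ = Σ_{n≥1} 10^{-n!}`, there is `0 < c < 1` with
`‖λ·10^n‖ < c^n` for infinitely many `n`; moreover `λ` is transcendental. -/
theorem liouville_number_in_mahler_set :
    (∃ c : ℝ, 0 < c ∧ c < 1 ∧
      {n : ℕ | |(∑' m : ℕ, (1 : ℝ) / 10 ^ Nat.factorial (m + 1)) * 10 ^ n -
        round ((∑' m : ℕ, (1 : ℝ) / 10 ^ Nat.factorial (m + 1)) * 10 ^ n)| < c ^ n}.Infinite) ∧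
    Transcendental ℚ (∑' m : ℕ, (1 : ℝ) / 10 ^ Nat.factorial (m + 1)) := by
  have hsum :
      ∑' m : ℕ, (1 : ℝ) / 10 ^ (m + 1)! = liouvilleNumber (10 : ℕ) - 1 / (10 : ℕ) :=
    mod_cast tsum_one_div_pow_factorial_succ (by norm_num : (1 : ℝ) < 10)
  rw [hsum]
  refine ⟨⟨1 / 10, by norm_num, by norm_num, Set.infinite_of_forall_exists_gt fun a => ?_⟩,
    transcendental_sub_one_div (by norm_num)⟩
  refine ⟨(a + 2)!, ?_, (Nat.lt_add_of_pos_right two_pos).trans_le (Nat.self_le_factorial _)⟩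
  exact_mod_cast abs_mul_pow_factorial_sub_round_lt (m := 10) (by norm_num) (Nat.le_add_left 2 a)
end

section
/- Let α > 1 be an integer and λ a nonzero real number. Then there exists 0 < c < 1 with ‖λα^n‖ < c^n for infinitely many n if and only if there exists ε > 0 such that the sequence of digits of the base-α expansion of λ contains infinitely many blocks x_n ⋯ x_{n+⌊εn⌋} consisting only of digit 0 or only of digit (α−1). -/
/-!
Write `xₙ = ⌊λα^{n+1}⌋ - α⌊λαⁿ⌋` for the digits and `fₙ = fract (λαⁿ)`, so that
`fₙ₊₁ = α fₙ - xₙ`. Iterating this shows that the block `xₙ ⋯ x_{n+m-1}` consists of zeros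
exactly when `αᵐ fₙ < 1`, and of digits `α - 1` exactly when `αᵐ (1 - fₙ) ≤ 1`. Since
`‖λαⁿ‖ = min (fₙ, 1 - fₙ)`, a block of length `m` starting at `n` is the same as `‖λαⁿ‖ ≲ α^{-m}`,
and `‖λαⁿ‖ < cⁿ` with `c < 1` translates into blocks of length `≈ εn` with `α^{-2ε} = c`.
-/

open Filter Int

noncomputable def digit (α : ℤ) (x : ℝ) (n : ℕ) : ℤ := ⌊x * (α : ℝ) ^ (n + 1)⌋ - α * ⌊x * (α : ℝ) ^ n⌋

section Digits

variable {α : ℤ} {x : ℝ}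

theorem digit_add (n j : ℕ) : digit α x (n + j) = digit α (x * (α : ℝ) ^ n) j := by
  simp only [digit, mul_assoc, ← pow_add, Nat.add_assoc]

theorem digit_succ (j : ℕ) : digit α x (j + 1) = digit α (x * α) j := by
  rw [add_comm, digit_add, pow_one]

theorem mul_intCast_eq_fract_add : x * α = α * fract x + ((α * ⌊x⌋ : ℤ) : ℝ) := by
  push_cast; rw [Int.fract]; ring

theorem digit_zero : digit α x 0 = ⌊(α : ℝ) * fract x⌋ := by
  rw [digit, zero_add, pow_one, pow_zero, mul_one, mul_intCast_eq_fract_add, floor_add_intCast,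
    add_sub_cancel_right]

theorem fract_mul_intCast_eq : fract (x * α) = α * fract x - digit α x 0 := by
  rw [mul_intCast_eq_fract_add, fract_add_intCast, digit_zero, Int.fract]

theorem digit_zero_eq_zero_iff (hα : 0 < α) : digit α x 0 = 0 ↔ α * fract x < 1 := by
  have : (0 : ℝ) ≤ α * fract x := mul_nonneg (by exact_mod_cast hα.le) (fract_nonneg x)
  rw [digit_zero, floor_eq_zero_iff, Set.mem_Ico]
  exact and_iff_right this

theorem digit_zero_eq_sub_one_iff (hα : 0 < α) : digit α x 0 = α - 1 ↔ α * (1 - fract x) ≤ 1 := by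
  have : (α : ℝ) * fract x < α := mul_lt_of_lt_one_right (by exact_mod_cast hα) (fract_lt_one x)
  rw [digit_zero, floor_eq_iff]
  push_cast
  constructor
  · intro h; linarith [h.1]
  · intro h; constructor <;> linarith

theorem forall_digit_eq_zero_iff (hα : 0 < α) (m : ℕ) :
    (∀ j < m, digit α x j = 0) ↔ (α : ℝ) ^ m * fract x < 1 := by
  induction m generalizing x with
  | zero => simpa using fract_lt_one x
  | succ m ih =>
    simp_rw [Nat.forall_lt_succ_left, digit_succ, ih, digit_zero_eq_zero_iff hα]
    have hshift (h0 : α * fract x < 1) : α ^ m * fract (x * α) = α ^ (m + 1) * fract x := by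
      rw [fract_mul_intCast_eq, (digit_zero_eq_zero_iff hα).2 h0]; push_cast; ring
    have hle : α * fract x ≤ α ^ (m + 1) * fract x :=
      mul_le_mul_of_nonneg_right (le_self_pow₀ (Int.cast_one_le_of_pos hα) m.succ_ne_zero)
        (fract_nonneg x)
    exact ⟨fun ⟨h0, hm⟩ => hshift h0 ▸ hm,
      fun h => have h0 := hle.trans_lt h; ⟨h0, (hshift h0).symm ▸ h⟩⟩

theorem forall_digit_eq_sub_one_iff (hα : 0 < α) (m : ℕ) :
    (∀ j < m, digit α x j = α - 1) ↔ (α : ℝ) ^ m * (1 - fract x) ≤ 1 := by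
  induction m generalizing x with
  | zero => simp [fract_nonneg x]
  | succ m ih =>
    simp_rw [Nat.forall_lt_succ_left, digit_succ, ih, digit_zero_eq_sub_one_iff hα]
    have hshift (h0 : α * (1 - fract x) ≤ 1) :
        α ^ m * (1 - fract (x * α)) = α ^ (m + 1) * (1 - fract x) := by
      rw [fract_mul_intCast_eq, (digit_zero_eq_sub_one_iff hα).2 h0]; push_cast; ring
    have hle : α * (1 - fract x) ≤ α ^ (m + 1) * (1 - fract x) :=
      mul_le_mul_of_nonneg_right (le_self_pow₀ (Int.cast_one_le_of_pos hα) m.succ_ne_zero)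
        (sub_nonneg.2 (fract_lt_one x).le)
    exact ⟨fun ⟨h0, hm⟩ => hshift h0 ▸ hm,
      fun h => have h0 := hle.trans h; ⟨h0, (hshift h0).symm ▸ h⟩⟩

theorem digit_block_of_pow_mul_abs_sub_round_lt_one (hα : 0 < α) {m : ℕ}
    (h : (α : ℝ) ^ m * |x - round x| < 1) :
    (∀ j < m, digit α x j = 0) ∨ (∀ j < m, digit α x j = α - 1) := by
  rw [forall_digit_eq_zero_iff hα, forall_digit_eq_sub_one_iff hα]
  rw [abs_sub_round_eq_min, mul_min_of_nonneg _ _ (by positivity), min_lt_iff] at h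
  exact h.imp id le_of_lt

theorem pow_mul_abs_sub_round_le_one_of_digit_block (hα : 0 < α) {m : ℕ}
    (h : (∀ j < m, digit α x j = 0) ∨ (∀ j < m, digit α x j = α - 1)) :
    (α : ℝ) ^ m * |x - round x| ≤ 1 := by
  rw [forall_digit_eq_zero_iff hα, forall_digit_eq_sub_one_iff hα] at h
  rw [abs_sub_round_eq_min, mul_min_of_nonneg _ _ (by positivity), min_le_iff]
  exact h.imp le_of_lt id

end Digits

section Rates

variable {a : ℕ → ℝ} {b : ℝ}

theorem eventually_pow_floor_mul_succ_le (hb : 1 ≤ b) {ε : ℝ} (hε : 0 < ε) :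
    ∀ᶠ n : ℕ in atTop, b ^ (⌊ε * n⌋₊ + 1) ≤ (b ^ (2 * ε)) ^ n := by
  filter_upwards [eventually_ge_atTop ⌈ε⁻¹⌉₊] with n hn
  have h1 : 1 ≤ ε * n := by
    rw [← inv_mul_le_iff₀ hε, mul_one]; exact Nat.ceil_le.1 hn
  have hexp : ((⌊ε * n⌋₊ + 1 : ℕ) : ℝ) ≤ 2 * ε * n := by
    push_cast; linarith [Nat.floor_le (by positivity : 0 ≤ ε * n)]
  calc b ^ (⌊ε * n⌋₊ + 1) = b ^ ((⌊ε * n⌋₊ + 1 : ℕ) : ℝ) := (Real.rpow_natCast b _).symm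
    _ ≤ b ^ (2 * ε * n) := Real.rpow_le_rpow_of_exponent_le hb hexp
    _ = (b ^ (2 * ε)) ^ n := by rw [Real.rpow_mul (by linarith), Real.rpow_natCast]

theorem exists_frequently_pow_floor_mul_lt_one (hb : 1 < b) {c : ℝ} (hc0 : 0 < c) (hc1 : c < 1)
    (h : ∃ᶠ n in atTop, a n < c ^ n) :
    ∃ ε : ℝ, 0 < ε ∧ ∃ᶠ n : ℕ in atTop, b ^ (⌊ε * n⌋₊ + 1) * a n < 1 := by
  set ε := Real.logb b c⁻¹ / 2
  have hε : 0 < ε := half_pos (Real.logb_pos hb (one_lt_inv₀ hc0 |>.2 hc1))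
  have hbε : b ^ (2 * ε) = c⁻¹ := by
    rw [mul_div_cancel₀ _ two_ne_zero, Real.rpow_logb (by linarith) hb.ne' (by positivity)]
  refine ⟨ε, hε, (h.and_eventually (eventually_pow_floor_mul_succ_le hb.le hε)).mono ?_⟩
  rintro n ⟨hlt, hle⟩
  calc b ^ _ * a n < b ^ _ * c ^ n := mul_lt_mul_of_pos_left hlt (by positivity)
    _ ≤ c⁻¹ ^ n * c ^ n := by rw [← hbε]; gcongr
    _ = 1 := by rw [← mul_pow, inv_mul_cancel₀ hc0.ne', one_pow]

theorem inv_pow_floor_mul_succ_lt (hb : 1 < b) {ε : ℝ} (n : ℕ) :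
    (b ^ (⌊ε * n⌋₊ + 1))⁻¹ < (b ^ (-ε)) ^ n := by
  have hb0 : 0 ≤ b := by linarith
  rw [← Real.rpow_natCast, ← Real.rpow_neg hb0, ← Real.rpow_natCast, ← Real.rpow_mul hb0]
  apply Real.rpow_lt_rpow_of_exponent_lt hb
  push_cast
  linarith [Nat.lt_floor_add_one (ε * n)]

theorem exists_frequently_lt_pow (hb : 1 < b) {ε : ℝ} (hε : 0 < ε)
    (h : ∃ᶠ n : ℕ in atTop, b ^ (⌊ε * n⌋₊ + 1) * a n ≤ 1) :
    ∃ c, 0 < c ∧ c < 1 ∧ ∃ᶠ n in atTop, a n < c ^ n := by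
  refine ⟨b ^ (-ε), Real.rpow_pos_of_pos (by linarith) _,
    Real.rpow_lt_one_of_one_lt_of_neg hb (by linarith), h.mono fun n hn => ?_⟩
  calc a n ≤ (b ^ (⌊ε * n⌋₊ + 1))⁻¹ := by rwa [← one_div, le_div_iff₀' (by positivity)]
    _ < _ := inv_pow_floor_mul_succ_lt hb n

end Rates

theorem mahler_set_integer_base_general (α : ℤ) (hα : 1 < α) (lam : ℝ) :
    (∃ c : ℝ, 0 < c ∧ c < 1 ∧
      {n : ℕ | |lam * (α : ℝ) ^ n - round (lam * (α : ℝ) ^ n)| < c ^ n}.Infinite) ↔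
    (∃ ε : ℝ, 0 < ε ∧
      {n : ℕ |
        (∀ j ≤ ⌊ε * n⌋₊, ⌊lam * (α : ℝ) ^ (n + j + 1)⌋ - α * ⌊lam * (α : ℝ) ^ (n + j)⌋ = 0) ∨
        (∀ j ≤ ⌊ε * n⌋₊, ⌊lam * (α : ℝ) ^ (n + j + 1)⌋ - α * ⌊lam * (α : ℝ) ^ (n + j)⌋ = α - 1)
        }.Infinite) := by
  have hα0 : 0 < α := by omega
  have hb : (1 : ℝ) < α := by exact_mod_cast hα
  have hblock (n m : ℕ) :
      ((∀ j ≤ m, digit α lam (n + j) = 0) ∨ (∀ j ≤ m, digit α lam (n + j) = α - 1)) ↔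
      ((∀ j < m + 1, digit α (lam * α ^ n) j = 0) ∨
        (∀ j < m + 1, digit α (lam * α ^ n) j = α - 1)) := by
    simp only [digit_add, Nat.lt_succ_iff]
  simp_rw [← Nat.frequently_atTop_iff_infinite]
  constructor
  · rintro ⟨c, hc0, hc1, h⟩
    obtain ⟨ε, hε, h⟩ := exists_frequently_pow_floor_mul_lt_one hb hc0 hc1 h
    exact ⟨ε, hε, h.mono fun n hn =>
      (hblock n _).2 (digit_block_of_pow_mul_abs_sub_round_lt_one hα0 hn)⟩
  · rintro ⟨ε, hε, h⟩
    exact exists_frequently_lt_pow hb hε (h.mono fun n hn =>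
      pow_mul_abs_sub_round_le_one_of_digit_block hα0 ((hblock n _).1 hn))

/-- For an integer base `α > 1` and a nonzero real `λ`, one has `‖λαⁿ‖ < cⁿ` for
infinitely many `n` (some `0 < c < 1`) iff for some `ε > 0` the base-`α` digit
sequence of `λ` (digits `x_n = ⌊λα^{n+1}⌋ - α⌊λαⁿ⌋`) contains infinitely many
blocks `x_n ⋯ x_{n+⌊εn⌋}` consisting only of `0`'s or only of `(α-1)`'s. -/
theorem mahler_set_integer_base (α : ℤ) (hα : 1 < α) (lam : ℝ) (hlam : lam ≠ 0) :
    (∃ c : ℝ, 0 < c ∧ c < 1 ∧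
      {n : ℕ | |lam * (α : ℝ) ^ n - round (lam * (α : ℝ) ^ n)| < c ^ n}.Infinite) ↔
    (∃ ε : ℝ, 0 < ε ∧
      {n : ℕ |
        (∀ j ≤ ⌊ε * n⌋₊, ⌊lam * (α : ℝ) ^ (n + j + 1)⌋ - α * ⌊lam * (α : ℝ) ^ (n + j)⌋ = 0) ∨
        (∀ j ≤ ⌊ε * n⌋₊, ⌊lam * (α : ℝ) ^ (n + j + 1)⌋ - α * ⌊lam * (α : ℝ) ^ (n + j)⌋ = α - 1)
        }.Infinite) :=
  mahler_set_integer_base_general α hα lam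
end

section
/- Let α be an algebraic number of degree d over ℚ with k = ℚ(α). If the trace Tr_{k/ℚ}(α^n) is an integer for all natural numbers n, then α is an algebraic integer. -/
/-!
The traces `Tr(αⁱ αʲ)` are integers, so every power of `α` lies in the complementary module of
`ℤ[α]` with respect to the trace form. That module is spanned by the dual basis of
`1, α, …, α^{d-1}`, hence is a finitely generated `ℤ`-module; a ring element all of whose powers
lie in a finitely generated module over a noetherian ring is integral.
-/

open IntermediateField
open LinearMap (BilinForm)

theorem IsIntegral.of_forall_pow_mem_of_fg {R A : Type*} [CommRing R] [IsNoetherianRing R]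
    [CommRing A] [Algebra R A] {M : Submodule R A} (hM : M.FG) {x : A}
    (hx : ∀ n : ℕ, x ^ n ∈ M) : IsIntegral R x := by
  have hle : Subalgebra.toSubmodule (Algebra.adjoin R {x}) ≤ M := by
    rw [Algebra.adjoin_eq_span, Submodule.span_le]
    rintro _ hy
    obtain ⟨n, rfl⟩ := Submonoid.mem_closure_singleton.mp hy
    exact hx n
  exact .of_mem_of_fg _ (hM.of_le hle) x (Algebra.self_mem_adjoin_singleton R x)

namespace LinearMap.BilinForm

variable {R S M : Type*} [CommRing R] [Field S] [AddCommGroup M] [Algebra R S] [Module R M]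
  [Module S M] [IsScalarTower R S M]

lemma mem_dualSubmodule_span {B : BilinForm S M} {s : Set M} {x : M} :
    x ∈ B.dualSubmodule (Submodule.span R s) ↔ ∀ y ∈ s, B x y ∈ (1 : Submodule R S) := by
  refine ⟨fun hx y hy => hx y (Submodule.subset_span hy), fun hs y hy => ?_⟩
  induction hy using Submodule.span_induction with
  | mem y hy => exact hs y hy
  | zero => simp
  | add y z _ _ hy hz => simpa using add_mem hy hz
  | smul r y _ hy => simpa using Submodule.smul_mem _ r hy

end LinearMap.BilinForm

namespace PowerBasis

variable {R K L : Type*} [CommRing R] [Field K] [Field L] [Algebra R K] [Algebra K L]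
  [Algebra R L] [IsScalarTower R K L]

lemma pow_gen_mem_dualSubmodule_of_trace_pow_gen_mem (pb : PowerBasis K L)
    (htr : ∀ n : ℕ, Algebra.trace K L (pb.gen ^ n) ∈ (algebraMap R K).range) (n : ℕ) :
    pb.gen ^ n ∈ (Algebra.traceForm K L).dualSubmodule (Submodule.span R (Set.range pb.basis)) := by
  rw [LinearMap.BilinForm.mem_dualSubmodule_span]
  rintro _ ⟨i, rfl⟩
  rw [basis_eq_pow, Algebra.traceForm_apply, ← pow_add, Submodule.mem_one]
  exact htr _

theorem isIntegral_gen_of_trace_pow_gen_mem [IsNoetherianRing R] [Algebra.IsSeparable K L]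
    (pb : PowerBasis K L)
    (htr : ∀ n : ℕ, Algebra.trace K L (pb.gen ^ n) ∈ (algebraMap R K).range) :
    IsIntegral R pb.gen := by
  have := pb.finite
  refine .of_forall_pow_mem_of_fg ?_ (pb.pow_gen_mem_dualSubmodule_of_trace_pow_gen_mem htr)
  rw [LinearMap.BilinForm.dualSubmodule_span_of_basis _ (traceForm_nondegenerate K L)]
  exact Submodule.fg_span (Set.finite_range _)

end PowerBasis

/-- If `α` is algebraic over `ℚ` and `Tr_{ℚ(α)/ℚ}(αⁿ)` is a (rational) integer for every
natural number `n`, then `α` is an algebraic integer. -/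
theorem algebraic_integer_of_integral_traces (α : ℂ) (hα : IsAlgebraic ℚ α)
    (htr : ∀ n : ℕ, ∃ m : ℤ,
      Algebra.trace ℚ ℚ⟮α⟯ ((IntermediateField.AdjoinSimple.gen ℚ α) ^ n) = (m : ℚ)) :
    IsIntegral ℤ α := by
  let pb := adjoin.powerBasis hα.isIntegral
  -- with finiteness, `Algebra.IsSeparable ℚ ℚ⟮α⟯` is inferred from characteristic zero
  have := pb.finite
  have hgen : IsIntegral ℤ pb.gen := pb.isIntegral_gen_of_trace_pow_gen_mem fun n => by
    obtain ⟨m, hm⟩ := htr n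
    exact ⟨m, (eq_intCast _ m).trans hm.symm⟩
  rw [adjoin.powerBasis_gen] at hgen
  simpa only [AdjoinSimple.algebraMap_gen] using hgen.algebraMap (B := ℂ)
end

section
/- Let α = (1+√5)/√2, a root of X^4 − 6X^2 + 4. Then α is a real algebraic number of degree 4, α ∉ ℚ(α²), Tr_{ℚ(α)/ℚ}(α^{2m+1}) = 0 for all natural numbers m, and α is not a root of any rational number. -/
open IntermediateField Polynomial

/-- The example `α = (1+√5)/√2`: it is a root of `X⁴ - 6X² + 4`, has degree 4 over `ℚ`,
`α ∉ ℚ(α²)`, the traces of all odd powers of `α` vanish, and no positive power of `α`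
is rational (`α` is not a root of a rational number). -/
theorem example_zero_trace_not_radical :
    ∀ α : ℝ, α = (1 + Real.sqrt 5) / Real.sqrt 2 →
    Polynomial.aeval α (X ^ 4 - 6 * X ^ 2 + 4 : ℚ[X]) = 0 ∧
    (minpoly ℚ α).natDegree = 4 ∧
    α ∉ ℚ⟮α ^ 2⟯ ∧
    (∀ m : ℕ,
      Algebra.trace ℚ ℚ⟮α⟯ ((IntermediateField.AdjoinSimple.gen ℚ α) ^ (2 * m + 1)) = 0) ∧
    (∀ j : ℕ, 1 ≤ j → ∀ r : ℚ, α ^ j ≠ (r : ℝ)) := by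
  intro α hα
  have h5 : Real.sqrt 5 ^ 2 = 5 := Real.sq_sqrt (by norm_num)
  have h2 : Real.sqrt 2 ^ 2 = 2 := Real.sq_sqrt (by norm_num)
  have h2ne : Real.sqrt 2 ≠ 0 := by positivity
  have hsq : α ^ 2 = 3 + Real.sqrt 5 := by
    rw [hα, div_pow, h2]
    field_simp
    nlinarith [h5]
  have h5irr : Irrational (Real.sqrt 5) := by
    simpa using (Nat.prime_five).irrational_sqrt
  have hnr : ∀ (m : ℤ), m = 2 ∨ m = 5 ∨ m = 10 → ∀ q : ℚ, q ^ 2 ≠ (m : ℚ) := by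
    intro m hm q h
    have hcast : ((q : ℝ)) ^ 2 = (m : ℤ) := by exact_mod_cast congrArg (fun x : ℚ => (x : ℝ)) h
    have hirr : Irrational (q : ℝ) := by
      refine irrational_nrt_of_notint_nrt 2 m hcast ?_ (by norm_num)
      rintro ⟨y, hy⟩
      have hq : q = (y : ℚ) := by exact_mod_cast hy
      rw [hq] at h
      have hy2 : y ^ 2 = m := by exact_mod_cast h
      have hm10 : m ≤ 10 := by omega
      have hb1 : y ≤ 4 := by nlinarith
      have hb2 : -4 ≤ y := by nlinarith
      interval_cases y <;> omega
    exact q.not_irrational hirr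
  -- key lemma: α is not of the form a + b √5 with a b rational
  have hab : ∀ a b : ℚ, α ≠ (a : ℝ) + (b : ℝ) * Real.sqrt 5 := by
    intro a b h
    have hkey : ((a ^ 2 + 5 * b ^ 2 - 3 : ℚ) : ℝ) = ((1 - 2 * a * b : ℚ) : ℝ) * Real.sqrt 5 := by
      push_cast
      have h2' : ((a : ℝ) + b * Real.sqrt 5) ^ 2 = 3 + Real.sqrt 5 := by rw [← h]; exact hsq
      linear_combination h2' - (b : ℝ) ^ 2 * h5
    by_cases hc : (1 - 2 * a * b : ℚ) = 0
    · have hA : (a ^ 2 + 5 * b ^ 2 - 3 : ℚ) = 0 := by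
        have : ((a ^ 2 + 5 * b ^ 2 - 3 : ℚ) : ℝ) = 0 := by rw [hkey, hc]; push_cast; ring
        exact_mod_cast this
      have hfac : (2 * a ^ 2 - 1) * (2 * a ^ 2 - 5) = 0 := by
        linear_combination (4 * a ^ 2) * hA + (5 * (1 + 2 * a * b)) * hc
      rcases mul_eq_zero.mp hfac with h1 | h1
      · exact hnr 2 (by norm_num) (2 * a) (by push_cast; linear_combination 2 * h1)
      · exact hnr 10 (by norm_num) (2 * a) (by push_cast; linear_combination 2 * h1)
    · refine h5irr ⟨(a ^ 2 + 5 * b ^ 2 - 3) / (1 - 2 * a * b), ?_⟩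
      have hcr : ((1 - 2 * a * b : ℚ) : ℝ) ≠ 0 := by exact_mod_cast hc
      rw [Rat.cast_div, hkey, mul_div_cancel_left₀ _ hcr]
  have hα4 : α ^ 4 - 6 * α ^ 2 + 4 = 0 := by
    linear_combination (α ^ 2 + Real.sqrt 5 - 3) * hsq + h5
  -- the root property
  have hroot : Polynomial.aeval α (X ^ 4 - 6 * X ^ 2 + 4 : ℚ[X]) = 0 := by
    simp only [map_add, map_sub, map_mul, map_pow, aeval_X, map_ofNat]
    linear_combination hα4
  have hmonic : (X ^ 4 - 6 * X ^ 2 + 4 : ℚ[X]).Monic := by monicity!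
  have hpdeg : (X ^ 4 - 6 * X ^ 2 + 4 : ℚ[X]).natDegree = 4 := by compute_degree!
  have hint : IsIntegral ℚ α := ⟨_, hmonic, hroot⟩
  have hdvd : minpoly ℚ α ∣ (X ^ 4 - 6 * X ^ 2 + 4 : ℚ[X]) := minpoly.dvd ℚ α hroot
  have hle4 : (minpoly ℚ α).natDegree ≤ 4 := by
    simpa [hpdeg] using Polynomial.natDegree_le_of_dvd hdvd hmonic.ne_zero
  have hpos : 0 < (minpoly ℚ α).natDegree := minpoly.natDegree_pos hint
  -- elements of ℚ(√5) have the form a + b √5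
  have hmonic2 : (X ^ 2 - C 5 : ℚ[X]).Monic := by monicity!
  have hz : Polynomial.aeval (Real.sqrt 5) (X ^ 2 - C 5 : ℚ[X]) = 0 := by
    simp only [map_sub, map_pow, aeval_X, aeval_C]
    rw [h5]
    norm_num
  have hint5 : IsIntegral ℚ (Real.sqrt 5) := ⟨_, hmonic2, hz⟩
  have hmem5 : ∀ x : ℝ, x ∈ ℚ⟮Real.sqrt 5⟯ → ∃ a b : ℚ, x = (a : ℝ) + (b : ℝ) * Real.sqrt 5 := by
    intro x hx
    have h' : x ∈ Algebra.adjoin ℚ {Real.sqrt 5} := by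
      rw [← IntermediateField.adjoin_simple_toSubalgebra_of_isAlgebraic hint5.isAlgebraic] at *
      exact hx
    rw [Algebra.adjoin_singleton_eq_range_aeval] at h'
    obtain ⟨p, hp⟩ := h'
    have hp' : Polynomial.aeval (Real.sqrt 5) p = x := hp
    have e := congrArg (Polynomial.aeval (Real.sqrt 5)) (Polynomial.modByMonic_add_div p (X ^ 2 - C 5))
    rw [map_add, map_mul, hz, zero_mul, add_zero, hp'] at e
    have hd2 : (X ^ 2 - C 5 : ℚ[X]).natDegree = 2 := by compute_degree!
    have hne1 : (X ^ 2 - C 5 : ℚ[X]) ≠ 1 := fun h => by rw [h] at hd2; simp at hd2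
    have hdeg : (p %ₘ (X ^ 2 - C 5)).natDegree ≤ 1 := by
      have := Polynomial.natDegree_modByMonic_lt p hmonic2 hne1
      omega
    obtain ⟨c, d, hcd⟩ := Polynomial.exists_eq_X_add_C_of_natDegree_le_one hdeg
    refine ⟨d, c, ?_⟩
    rw [← e, hcd]
    simp only [map_add, map_mul, aeval_X, aeval_C]
    rw [show (algebraMap ℚ ℝ) c = (c : ℝ) from rfl, show (algebraMap ℚ ℝ) d = (d : ℝ) from rfl]
    ring
  -- α ∉ ℚ(α²)
  have hsub : ℚ⟮α ^ 2⟯ ≤ ℚ⟮Real.sqrt 5⟯ := by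
    rw [adjoin_simple_le_iff, hsq]
    refine add_mem ?_ (mem_adjoin_simple_self ℚ _)
    have := IntermediateField.algebraMap_mem ℚ⟮Real.sqrt 5⟯ (3 : ℚ)
    simp only [map_ofNat] at this
    exact this
  have hnotmem : α ∉ ℚ⟮α ^ 2⟯ := by
    intro hmem
    obtain ⟨a, b, hx⟩ := hmem5 α (hsub hmem)
    exact hab a b hx
  -- the minimal polynomial has degree 4
  have hdeg4 : (minpoly ℚ α).natDegree = 4 := by
    by_contra hne
    have hq0 := minpoly.aeval ℚ α
    have hlc := (minpoly.monic hint).coeff_natDegree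
    rw [Polynomial.aeval_eq_sum_range] at hq0
    have hn : (minpoly ℚ α).natDegree = 1 ∨ (minpoly ℚ α).natDegree = 2 ∨
        (minpoly ℚ α).natDegree = 3 := by omega
    rcases hn with hn | hn | hn <;> rw [hn] at hq0 hlc <;>
      simp only [Finset.sum_range_succ, Finset.sum_range_zero, zero_add, pow_zero, pow_one, hlc,
        one_smul, mul_one, Rat.smul_def] at hq0
    · -- degree 1
      exact hab (-(minpoly ℚ α).coeff 0) 0 (by push_cast at hq0 ⊢; linarith)
    · -- degree 2
      set c := (minpoly ℚ α).coeff 1 with hc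
      set d := (minpoly ℚ α).coeff 0 with hd
      rw [hsq] at hq0
      by_cases hcz : c = 0
      · rw [hcz] at hq0
        refine h5irr ⟨-d - 3, ?_⟩
        push_cast
        push_cast at hq0
        linarith
      · refine hab ((-d - 3) / c) (-1 / c) ?_
        have hcr : (c : ℝ) ≠ 0 := by exact_mod_cast hcz
        push_cast
        push_cast at hq0
        field_simp
        linear_combination hq0
    · -- degree 3
      set b := (minpoly ℚ α).coeff 2 with hb
      set c := (minpoly ℚ α).coeff 1 with hc
      set d := (minpoly ℚ α).coeff 0 with hd
      set u : ℚ := 6 + c - b ^ 2 with hu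
      set v : ℚ := d - b * c with hv
      set w : ℚ := -(4 + b * d) with hw
      set g : ℚ[X] := C u * X ^ 2 + C v * X + C w with hgdef
      have hg : Polynomial.aeval α g = 0 := by
        rw [hgdef]
        simp only [map_add, map_sub, map_mul, map_pow, aeval_X, aeval_C,
          show (algebraMap ℚ ℝ) = ((↑) : ℚ → ℝ) from rfl]
        rw [hu, hv, hw]
        push_cast
        linear_combination (α - (b : ℝ)) * hq0 - hα4
      by_cases hgz : g = 0
      · have e2 : u = 0 := by
          have := congrArg (fun q => Polynomial.coeff q 2) hgz
          simpa [hgdef, Polynomial.coeff_C_mul, Polynomial.coeff_X_pow, Polynomial.coeff_C,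
            Polynomial.coeff_X] using this
        have e1 : v = 0 := by
          have := congrArg (fun q => Polynomial.coeff q 1) hgz
          simpa [hgdef, Polynomial.coeff_C_mul, Polynomial.coeff_X_pow, Polynomial.coeff_C,
            Polynomial.coeff_X] using this
        have e0 : w = 0 := by
          have := congrArg (fun q => Polynomial.coeff q 0) hgz
          simpa [hgdef, Polynomial.coeff_C_mul, Polynomial.coeff_X_pow, Polynomial.coeff_C,
            Polynomial.coeff_X] using this
        rw [hu] at e2
        rw [hv] at e1
        rw [hw] at e0
        have hb4 : (b ^ 2 - 3) ^ 2 = (5 : ℚ) := by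
          linear_combination (-(b ^ 2)) * e2 + (-b) * e1 - e0
        exact hnr 5 (by norm_num) (b ^ 2 - 3) (by exact_mod_cast hb4)
      · have h3le := Polynomial.natDegree_le_of_dvd (minpoly.dvd ℚ α hg) hgz
        rw [hn] at h3le
        have hgle : g.natDegree ≤ 2 := by rw [hgdef]; compute_degree
        omega
  -- the minimal polynomial is X⁴ - 6X² + 4
  have heqmin : minpoly ℚ α = X ^ 4 - 6 * X ^ 2 + 4 := by
    refine (Polynomial.eq_of_monic_of_dvd_of_natDegree_le (minpoly.monic hint) hmonic hdvd ?_).symm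
    rw [hpdeg, hdeg4]
  refine ⟨hroot, hdeg4, hnotmem, ?_, ?_⟩
  · -- traces of odd powers vanish
    intro m
    haveI := IntermediateField.adjoin.finiteDimensional hint
    set g := IntermediateField.AdjoinSimple.gen ℚ α with hg
    let pb := IntermediateField.adjoin.powerBasis hint
    have hming : minpoly ℚ pb.gen = X ^ 4 - 6 * X ^ 2 + 4 := by
      rw [IntermediateField.adjoin.powerBasis_gen]; exact (IntermediateField.minpoly_gen ℚ α).trans heqmin
    have hy : Polynomial.aeval (-g) (minpoly ℚ pb.gen) = 0 := by
      have hgr : Polynomial.aeval g (minpoly ℚ pb.gen) = 0 := by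
        rw [IntermediateField.adjoin.powerBasis_gen]; erw [IntermediateField.minpoly_gen]
        exact IntermediateField.aeval_gen_minpoly ℚ α
      rw [hming] at hgr ⊢
      simp only [map_add, map_sub, map_mul, map_pow, aeval_X, map_ofNat] at hgr ⊢
      linear_combination hgr
    let σ : ℚ⟮α⟯ →ₐ[ℚ] ℚ⟮α⟯ := pb.lift (-g) hy
    have hσg : σ g = -g := pb.lift_gen (-g) hy
    have hinj : Function.Injective σ := σ.toRingHom.injective
    have hsurj : Function.Surjective σ :=
      LinearMap.injective_iff_surjective.mp (show Function.Injective σ.toLinearMap from hinj)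
    let e : ℚ⟮α⟯ ≃ₐ[ℚ] ℚ⟮α⟯ := AlgEquiv.ofBijective σ ⟨hinj, hsurj⟩
    have htr := Algebra.trace_eq_of_algEquiv e (g ^ (2 * m + 1))
    have he : e (g ^ (2 * m + 1)) = -(g ^ (2 * m + 1)) := by
      show σ (g ^ (2 * m + 1)) = _
      rw [map_pow, hσg, Odd.neg_pow ⟨m, by ring⟩]
    rw [he, map_neg] at htr
    linarith
  · -- no positive power of α is rational
    have hpow : ∀ k : ℕ, 1 ≤ k →
        ∃ a b : ℕ, 1 ≤ b ∧ (3 + Real.sqrt 5) ^ k = a + b * Real.sqrt 5 := by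
      intro k hk
      induction k with
      | zero => omega
      | succ n ih =>
        rcases Nat.eq_zero_or_pos n with rfl | hn
        · exact ⟨3, 1, le_refl 1, by norm_num⟩
        · obtain ⟨a, b, hb, hab'⟩ := ih hn
          refine ⟨3 * a + 5 * b, a + 3 * b, by omega, ?_⟩
          rw [pow_succ, hab']
          push_cast
          linear_combination (b : ℝ) * h5
    have heven : ∀ k : ℕ, 1 ≤ k → ∀ r : ℚ, α ^ (2 * k) ≠ (r : ℝ) := by
      intro k hk r h
      obtain ⟨a, b, hb, hab'⟩ := hpow k hk
      rw [pow_mul, hsq, hab'] at h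
      have hbne : ((b : ℝ)) ≠ 0 := by positivity
      refine h5irr ⟨(r - a) / b, ?_⟩
      push_cast
      field_simp
      linarith
    intro j hj r h
    have h2j : α ^ (2 * j) = ((r ^ 2 : ℚ) : ℝ) := by
      rw [two_mul, pow_add, h]
      push_cast
      ring
    exact heven j hj (r ^ 2) h2j
end

section
/- Let α be a real positive algebraic number, L = ℚ(α^h) for some h ∈ ℕ×, and let h' be the smallest positive integer with α^{h'} ∈ L. Then the polynomial X^{h'} − α^{h'} is irreducible over L, [ℚ(α) : L] = h', and for every a ∈ ℕ×: Tr_{ℚ(α)/L}(α^a) = h'·α^a if h' divides a, and Tr_{ℚ(α)/L}(α^a) = 0 otherwise. -/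
/-!
Since `α ^ h' ∈ L`, the minimal polynomial of `α` over `L` divides `X ^ h' - α ^ h'`. All complex
roots of this binomial have absolute value `α`, so the constant coefficient of the minimal
polynomial, an element of `L ⊆ ℝ`, is `± α ^ d` with `d` its degree. Thus `α ^ d ∈ L`, and
minimality of `h'` forces `d = h'`: the binomial is the minimal polynomial. In the power basis
`1, α, …, α ^ (h' - 1)`, multiplication by `α ^ r` with `0 < r < h'` permutes the basis cyclically
up to the scalar `α ^ h'`, so its matrix has zero diagonal and `α ^ r` has trace zero.
-/

open IntermediateField Polynomial

theorem Polynomial.norm_coeff_zero_of_forall_norm_root_eq {K : Type*} [NormedField K]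
    {p : K[X]} (hmonic : p.Monic) (hsplit : p.Splits) {r : ℝ}
    (hroots : ∀ z ∈ p.roots, ‖z‖ = r) : ‖p.coeff 0‖ = r ^ p.natDegree := by
  rw [hsplit.coeff_zero_eq_prod_roots_of_monic hmonic, norm_mul, norm_pow, norm_neg, norm_one,
    one_pow, one_mul, ← splits_iff_card_roots.mp hsplit, ← Multiset.prod_replicate,
    ← Multiset.map_const', ← Multiset.map_congr rfl hroots]
  exact map_multiset_prod (normHom : K →*₀ ℝ) _

theorem Complex.norm_eq_of_pow_eq_ofReal_pow {z : ℂ} {α : ℝ} (hα : 0 ≤ α) {n : ℕ} (hn : n ≠ 0)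
    (hz : z ^ n = (α : ℂ) ^ n) : ‖z‖ = α := by
  rw [← pow_left_inj₀ (norm_nonneg z) hα hn, ← norm_pow, hz, ← Complex.ofReal_pow,
    Complex.norm_real, Real.norm_of_nonneg (pow_nonneg hα n)]

section RealRadical

variable {F : Type*} [Field F] [Algebra F ℝ] {α : ℝ} {n : ℕ} {c : F}

theorem isIntegral_of_algebraMap_eq_pow (hn : n ≠ 0) (hc : algebraMap F ℝ c = α ^ n) :
    IsIntegral F α :=
  .of_pow (Nat.pos_of_ne_zero hn) (hc ▸ isIntegral_algebraMap)

theorem pow_natDegree_minpoly_mem_range (hα : 0 < α) (hn : n ≠ 0)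
    (hc : algebraMap F ℝ c = α ^ n) :
    α ^ (minpoly F α).natDegree ∈ Set.range (algebraMap F ℝ) := by
  have hint := isIntegral_of_algebraMap_eq_pow hn hc
  set φ : F →+* ℂ := Complex.ofRealHom.comp (algebraMap F ℝ)
  set p := minpoly F α
  have hdvd : p ∣ X ^ n - C c := minpoly.dvd F α (by simp [hc])
  have hroots : ∀ z ∈ (p.map φ).roots, ‖z‖ = α := by
    intro z hz
    have hz' := eval_eq_zero_of_dvd_of_eval_eq_zero (Polynomial.map_dvd φ hdvd)
      ((mem_roots ((minpoly.monic hint).map φ).ne_zero).mp hz)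
    refine Complex.norm_eq_of_pow_eq_ofReal_pow hα.le hn ?_
    simpa [φ, hc, sub_eq_zero] using hz'
  have hnorm := norm_coeff_zero_of_forall_norm_root_eq ((minpoly.monic hint).map φ)
    (IsAlgClosed.splits _) hroots
  rw [coeff_map, (minpoly.monic hint).natDegree_map] at hnorm
  have habs : |algebraMap F ℝ (p.coeff 0)| = α ^ p.natDegree := by
    rw [← Real.norm_eq_abs, ← Complex.norm_real]
    exact hnorm
  rcases abs_choice (algebraMap F ℝ (p.coeff 0)) with h | h
  · exact ⟨p.coeff 0, by rw [← habs, h]⟩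
  · exact ⟨-p.coeff 0, by rw [← habs, h, map_neg]⟩

theorem minpoly_eq_X_pow_sub_C_of_minimal (hα : 0 < α) (hn : 0 < n)
    (hc : algebraMap F ℝ c = α ^ n)
    (hmin : ∀ m : ℕ, 0 < m → α ^ m ∈ Set.range (algebraMap F ℝ) → n ≤ m) :
    minpoly F α = X ^ n - C c := by
  have hint := isIntegral_of_algebraMap_eq_pow hn.ne' hc
  have hdvd : minpoly F α ∣ X ^ n - C c := minpoly.dvd F α (by simp [hc])
  refine (eq_of_monic_of_dvd_of_natDegree_le (minpoly.monic hint) (monic_X_pow_sub_C c hn.ne')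
    hdvd ?_).symm
  rw [natDegree_X_pow_sub_C]
  exact hmin _ (minpoly.natDegree_pos hint) (pow_natDegree_minpoly_mem_range hα hn.ne' hc)

end RealRadical

namespace PowerBasis

variable {R S : Type*} [CommRing R] [CommRing S] [Algebra R S] (pb : PowerBasis R S)

theorem repr_gen_pow_of_lt {k : ℕ} (hk : k < pb.dim) (i : Fin pb.dim) :
    pb.basis.repr (pb.gen ^ k) i = if k = i then 1 else 0 := by
  rw [← pb.basis_eq_pow ⟨k, hk⟩, pb.basis.repr_self, Finsupp.single_apply]
  simp only [Fin.ext_iff]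

variable {pb} {c : R} (hgen : pb.gen ^ pb.dim = algebraMap R S c)
include hgen

theorem trace_gen_pow_eq_zero {r : ℕ} (hr0 : 0 < r) (hr : r < pb.dim) :
    Algebra.trace R S (pb.gen ^ r) = 0 := by
  classical
  rw [Algebra.trace_eq_matrix_trace pb.basis, Matrix.trace]
  refine Finset.sum_eq_zero fun i _ => ?_
  rw [Matrix.diag_apply, Algebra.leftMulMatrix_eq_repr_mul, pb.basis_eq_pow, ← pow_add]
  by_cases hlt : r + i < pb.dim
  · rw [pb.repr_gen_pow_of_lt hlt, if_neg (by omega)]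
  · have hsplit : pb.gen ^ (r + i) = c • pb.gen ^ (r + i - pb.dim) := by
      rw [Algebra.smul_def, ← hgen, ← pow_add]
      congr 1
      omega
    rw [hsplit, map_smul, Finsupp.smul_apply, pb.repr_gen_pow_of_lt (by omega),
      if_neg (by omega), smul_zero]

theorem trace_gen_pow [Nontrivial S] (a : ℕ) :
    Algebra.trace R S (pb.gen ^ a) = if pb.dim ∣ a then pb.dim • c ^ (a / pb.dim) else 0 := by
  have hpow : pb.gen ^ a = c ^ (a / pb.dim) • pb.gen ^ (a % pb.dim) := by
    rw [Algebra.smul_def, map_pow, ← hgen, ← pow_mul, ← pow_add, Nat.div_add_mod]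
  rw [hpow, map_smul]
  split_ifs with hdvd
  · rw [Nat.mod_eq_zero_of_dvd hdvd, pow_zero, ← map_one (algebraMap R S),
      Algebra.trace_algebraMap_of_basis pb.basis, Fintype.card_fin, smul_comm, smul_eq_mul,
      mul_one]
  · rw [trace_gen_pow_eq_zero hgen (Nat.pos_of_ne_zero (mt Nat.dvd_of_mod_eq_zero hdvd))
      (Nat.mod_lt _ pb.dim_pos), smul_zero]

end PowerBasis

theorem kummer_real_positive_general (α : ℝ) (hpos : 0 < α)
    (L : IntermediateField ℚ ℝ)
    (h' : ℕ) (hh' : 0 < h') (hmem : α ^ h' ∈ L)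
    (hmin : ∀ m : ℕ, 0 < m → α ^ m ∈ L → h' ≤ m) :
    Irreducible (X ^ h' - C (⟨α ^ h', hmem⟩ : L) : Polynomial L) ∧
    Module.finrank L (IntermediateField.adjoin L {α}) = h' ∧
    ∀ a : ℕ, 0 < a →
      ((Algebra.trace L (IntermediateField.adjoin L {α})
          ((IntermediateField.AdjoinSimple.gen L α) ^ a) : L) : ℝ) =
        if h' ∣ a then (h' : ℝ) * α ^ a else 0 := by
  set c : L := ⟨α ^ h', hmem⟩
  have hint : IsIntegral L α := isIntegral_of_algebraMap_eq_pow (c := c) hh'.ne' rfl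
  have hminpoly : minpoly L α = X ^ h' - C c :=
    minpoly_eq_X_pow_sub_C_of_minimal hpos hh' rfl fun m hm ⟨x, hx⟩ => hmin m hm (hx ▸ x.2)
  set pb := adjoin.powerBasis hint
  have hdim : pb.dim = h' := by
    rw [adjoin.powerBasis_dim, hminpoly, natDegree_X_pow_sub_C]
  have hgen : pb.gen ^ pb.dim = algebraMap L _ c := by
    have := minpoly.aeval L (AdjoinSimple.gen L α)
    rwa [minpoly_gen, hminpoly, map_sub, aeval_X_pow, aeval_C, sub_eq_zero,
      ← adjoin.powerBasis_gen hint, ← hdim] at this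
  refine ⟨hminpoly ▸ minpoly.irreducible hint, hdim ▸ pb.finrank, fun a _ => ?_⟩
  rw [← adjoin.powerBasis_gen hint, PowerBasis.trace_gen_pow hgen, hdim]
  split_ifs with hdvd
  · obtain ⟨k, rfl⟩ := hdvd
    simp [c, Nat.mul_div_cancel_left k hh', pow_mul]
  · rfl

/-- For a real positive algebraic `α`, `L = ℚ(α^h)` and `h'` the smallest positive integer
with `α^{h'} ∈ L`: the polynomial `X^{h'} - α^{h'}` is irreducible over `L`,
`[ℚ(α) : L] = h'`, and `Tr_{ℚ(α)/L}(α^a) = h'·α^a` if `h' ∣ a` and `0` otherwise. -/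
theorem kummer_real_positive (α : ℝ) (hpos : 0 < α) (halg : IsAlgebraic ℚ α)
    (h : ℕ) (hh : 0 < h) (L : IntermediateField ℚ ℝ) (hL : L = ℚ⟮α ^ h⟯)
    (h' : ℕ) (hh' : 0 < h') (hmem : α ^ h' ∈ L)
    (hmin : ∀ m : ℕ, 0 < m → α ^ m ∈ L → h' ≤ m) :
    Irreducible (X ^ h' - C (⟨α ^ h', hmem⟩ : L) : Polynomial L) ∧
    Module.finrank L (IntermediateField.adjoin L {α}) = h' ∧
    ∀ a : ℕ, 0 < a →
      ((Algebra.trace L (IntermediateField.adjoin L {α})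
          ((IntermediateField.AdjoinSimple.gen L α) ^ a) : L) : ℝ) =
        if h' ∣ a then (h' : ℝ) * α ^ a else 0 :=
  kummer_real_positive_general α hpos L h' hh' hmem hmin
end

section
/- Let α be a real, positive algebraic number and a, h positive integers. The following are equivalent: (1) Tr_{ℚ(α)/ℚ(α^h)}(α^a) = 0; (2) a is not divisible by the degree [ℚ(α) : ℚ(α^h)]; (3) α^a ∉ ℚ(α^h). -/
/-!
If `α > 0` and `α ^ h ∈ L`, every conjugate of `α` over `L` is an `h`-th root of `α ^ h`, so it
has absolute value `α`. The constant coefficient of the minimal polynomial, which lies in `L`, is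
therefore `± α ^ d` with `d = [L(α) : L]`, so `α ^ d ∈ L`. Minimality of `d` then gives
`α ^ a ∈ L ↔ d ∣ a`, and in the power basis `1, α, …, α ^ (d - 1)` multiplication by `α ^ a` is a
monomial matrix which has zero diagonal exactly when `d ∤ a`, and is `α ^ a` times the identity
otherwise.
-/

open IntermediateField Polynomial

namespace PowerBasis

variable {K S : Type*} [Field K] [CommRing S] [Algebra K S] (pb : PowerBasis K S) {c : K}

theorem trace_gen_pow_eq_zero_of_lt (hgen : pb.gen ^ pb.dim = algebraMap K S c)
    {r : ℕ} (hr : 0 < r) (hrd : r < pb.dim) : Algebra.trace K S (pb.gen ^ r) = 0 := by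
  classical
  rw [Algebra.trace_eq_matrix_trace pb.basis, Matrix.trace]
  refine Finset.sum_eq_zero fun i _ => ?_
  rw [Matrix.diag_apply, Algebra.leftMulMatrix_eq_repr_mul, pb.basis_eq_pow i, ← pow_add]
  -- `gen ^ (r + i)` is a scalar multiple of a basis vector other than `gen ^ i`
  rcases lt_or_ge (r + i) pb.dim with hlt | hge
  · rw [← pb.basis_eq_pow ⟨r + i, hlt⟩, pb.basis.repr_self, Finsupp.single_apply,
      if_neg (by simp [Fin.ext_iff, hr.ne'])]
  · have hsub : r + i - pb.dim < pb.dim := by omega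
    rw [show r + i = pb.dim + (r + i - pb.dim) by omega, pow_add, hgen, ← Algebra.smul_def,
      ← pb.basis_eq_pow ⟨_, hsub⟩, map_smul, Finsupp.smul_apply, pb.basis.repr_self,
      Finsupp.single_apply, if_neg (by simp [Fin.ext_iff]; omega), smul_zero]

theorem trace_gen_pow_eq_zero_iff [CharZero K] [Nontrivial S]
    (hgen : pb.gen ^ pb.dim = algebraMap K S c) (hc : c ≠ 0) (a : ℕ) :
    Algebra.trace K S (pb.gen ^ a) = 0 ↔ ¬ pb.dim ∣ a := by
  have hdecomp : pb.gen ^ a = c ^ (a / pb.dim) • pb.gen ^ (a % pb.dim) := by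
    rw [Algebra.smul_def, map_pow, ← hgen, ← pow_mul, ← pow_add, Nat.div_add_mod]
  constructor
  · rintro htr ⟨k, rfl⟩
    rw [hdecomp, Nat.mul_mod_right, pow_zero, map_smul, ← map_one (algebraMap K S),
      Algebra.trace_algebraMap, pb.finrank] at htr
    simp [hc, pb.dim_pos.ne'] at htr
  · intro hnd
    rw [hdecomp, map_smul, pb.trace_gen_pow_eq_zero_of_lt hgen
      (Nat.pos_of_ne_zero (mt Nat.dvd_of_mod_eq_zero hnd)) (Nat.mod_lt _ pb.dim_pos), smul_zero]

end PowerBasis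

section PowMem

variable {K E : Type*} [Field K] [Field E] [Algebra K E] {L : IntermediateField K E} {x : E}

theorem isIntegral_of_pow_mem {h : ℕ} (hh : 0 < h) (hxh : x ^ h ∈ L) : IsIntegral L x :=
  .of_pow hh (isIntegral_algebraMap (A := E) (x := (⟨x ^ h, hxh⟩ : L)))

theorem natDegree_minpoly_le_of_pow_mem {r : ℕ} (hr : 0 < r) (hxr : x ^ r ∈ L) :
    (minpoly L x).natDegree ≤ r := by
  have hle := minpoly.min L x (monic_X_pow_sub_C (⟨x ^ r, hxr⟩ : L) hr.ne') (by simp)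
  rw [degree_X_pow_sub_C hr] at hle
  exact natDegree_le_iff_degree_le.mpr hle

theorem pow_mem_iff_natDegree_minpoly_dvd (hx : IsIntegral L x) (hx0 : x ≠ 0)
    (hxd : x ^ (minpoly L x).natDegree ∈ L) (a : ℕ) :
    x ^ a ∈ L ↔ (minpoly L x).natDegree ∣ a := by
  set d := (minpoly L x).natDegree
  refine ⟨fun hxa => ?_, fun ⟨k, hk⟩ => hk ▸ pow_mul x d k ▸ pow_mem hxd k⟩
  by_contra hnd
  have hrem : x ^ (a % d) ∈ L := by
    have hsplit : x ^ a = (x ^ d) ^ (a / d) * x ^ (a % d) := by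
      rw [← pow_mul, ← pow_add, Nat.div_add_mod]
    have hquot : x ^ (a % d) = x ^ a / (x ^ d) ^ (a / d) :=
      eq_div_of_mul_eq (pow_ne_zero _ (pow_ne_zero _ hx0)) (by rw [mul_comm, ← hsplit])
    rw [hquot]
    exact div_mem hxa (pow_mem hxd _)
  have := natDegree_minpoly_le_of_pow_mem (Nat.pos_of_ne_zero (mt Nat.dvd_of_mod_eq_zero hnd)) hrem
  exact (Nat.mod_lt a (minpoly.natDegree_pos hx)).not_ge this

end PowMem

theorem norm_eq_of_pow_eq {𝕜 : Type*} [NormedDivisionRing 𝕜] {z w : 𝕜} {h : ℕ} (hh : h ≠ 0)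
    (hzw : z ^ h = w ^ h) : ‖z‖ = ‖w‖ :=
  (pow_left_inj₀ (norm_nonneg z) (norm_nonneg w) hh).mp (by rw [← norm_pow, hzw, norm_pow])

theorem Polynomial.norm_coeff_zero_eq_pow_of_forall_norm_roots {𝕜 : Type*} [NormedField 𝕜]
    [IsAlgClosed 𝕜] {p : 𝕜[X]} (hp : p.Monic)
    {r : ℝ} (hroots : ∀ z ∈ p.roots, ‖z‖ = r) : ‖p.coeff 0‖ = r ^ p.natDegree := by
  have hsplit : p.Splits := IsAlgClosed.splits p
  have hnorms : p.roots.map (‖·‖) = Multiset.replicate p.natDegree r := by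
    rw [Multiset.eq_replicate, Multiset.card_map, ← splits_iff_card_roots.mp hsplit]
    refine ⟨rfl, fun b hb => ?_⟩
    obtain ⟨z, hz, rfl⟩ := Multiset.mem_map.mp hb
    exact hroots z hz
  rw [hsplit.coeff_zero_eq_prod_roots_of_monic hp, norm_mul, norm_pow, norm_neg, norm_one, one_pow,
    one_mul, ← Multiset.prod_replicate, ← hnorms]
  exact map_multiset_prod (normHom : 𝕜 →*₀ ℝ) _

theorem pow_natDegree_minpoly_mem_of_pow_mem {K : Type*} [Field K] [Algebra K ℝ]
    {L : IntermediateField K ℝ} {α : ℝ} (hpos : 0 < α) {h : ℕ} (hh : 0 < h) (hαh : α ^ h ∈ L) :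
    α ^ (minpoly L α).natDegree ∈ L := by
  have hint : IsIntegral L α := isIntegral_of_pow_mem hh hαh
  let f : L →+* ℂ := Complex.ofRealHom.comp (algebraMap L ℝ)
  have hdvd : (minpoly L α).map f ∣ X ^ h - C ((α : ℂ) ^ h) := by
    convert map_dvd f (minpoly.dvd L α (p := X ^ h - C ⟨α ^ h, hαh⟩) (by simp)) using 1
    simp [f]
  have hroots : ∀ z ∈ ((minpoly L α).map f).roots, ‖z‖ = α := by
    intro z hz
    have hz0 := eval_eq_zero_of_dvd_of_eval_eq_zero hdvd (isRoot_of_mem_roots hz)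
    simp only [eval_sub, eval_pow, eval_X, eval_C, sub_eq_zero] at hz0
    rw [norm_eq_of_pow_eq hh.ne' hz0, Complex.norm_real, Real.norm_of_nonneg hpos.le]
  have hcoeff := norm_coeff_zero_eq_pow_of_forall_norm_roots ((minpoly.monic hint).map f) hroots
  rw [natDegree_map, coeff_map] at hcoeff
  rw [← hcoeff]
  simp [f]

theorem zero_trace_real_characterization_general (α : ℝ) (hpos : 0 < α)
    (a h : ℕ) (hh : 0 < h)
    (L : IntermediateField ℚ ℝ) (hL : L = ℚ⟮α ^ h⟯) :
    (Algebra.trace L (IntermediateField.adjoin L {α})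
        ((IntermediateField.AdjoinSimple.gen L α) ^ a) = 0 ↔
      ¬ (Module.finrank L (IntermediateField.adjoin L {α}) ∣ a)) ∧
    (¬ (Module.finrank L (IntermediateField.adjoin L {α}) ∣ a) ↔ α ^ a ∉ L) := by
  have hαh : α ^ h ∈ L := hL ▸ mem_adjoin_simple_self ℚ (α ^ h)
  have hint : IsIntegral L α := isIntegral_of_pow_mem hh hαh
  have hαd := pow_natDegree_minpoly_mem_of_pow_mem hpos hh hαh
  have hgen : (adjoin.powerBasis hint).gen ^ (adjoin.powerBasis hint).dim =
      algebraMap L L⟮α⟯ ⟨_, hαd⟩ := by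
    rw [adjoin.powerBasis_gen, adjoin.powerBasis_dim]
    rfl
  have hc : (⟨_, hαd⟩ : L) ≠ 0 := Subtype.coe_ne_coe.mp (pow_ne_zero _ hpos.ne')
  have htrace := (adjoin.powerBasis hint).trace_gen_pow_eq_zero_iff hgen hc a
  rw [adjoin.powerBasis_gen, adjoin.powerBasis_dim] at htrace
  rw [adjoin.finrank hint, pow_mem_iff_natDegree_minpoly_dvd hint hpos.ne' hαd a]
  exact ⟨htrace, Iff.rfl⟩

/-- Lemma 6 (lemzerotracereal): for a real positive algebraic `α` and positive integers
`a, h`, the following are equivalent: `Tr_{ℚ(α)/ℚ(α^h)}(α^a) = 0`; the degree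
`[ℚ(α) : ℚ(α^h)]` does not divide `a`; and `α^a ∉ ℚ(α^h)`. -/
theorem zero_trace_real_characterization (α : ℝ) (hpos : 0 < α) (halg : IsAlgebraic ℚ α)
    (a h : ℕ) (ha : 0 < a) (hh : 0 < h)
    (L : IntermediateField ℚ ℝ) (hL : L = ℚ⟮α ^ h⟯) :
    (Algebra.trace L (IntermediateField.adjoin L {α})
        ((IntermediateField.AdjoinSimple.gen L α) ^ a) = 0 ↔
      ¬ (Module.finrank L (IntermediateField.adjoin L {α}) ∣ a)) ∧
    (¬ (Module.finrank L (IntermediateField.adjoin L {α}) ∣ a) ↔ α ^ a ∉ L) :=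
  zero_trace_real_characterization_general α hpos a h hh L hL
end

section
/- Let α be an algebraic number with |α| > 1 such that all conjugates of α other than α itself have absolute value strictly less than 1 (α is a pseudo-PV number), or let α be a Salem number. Let α = α₁, α₂, …, α_d be the conjugates of α. Then for any algebraic numbers A₀, A₁, …, A_d, not all zero, there are only finitely many natural numbers n with A₀ + A₁α₁^n + ⋯ + A_d α_d^n = 0. -/
/-!
Choose a conjugate `β₀` of `α` whose coefficient `A β₀` is nonzero and an automorphism `τ` of the
field of algebraic numbers with `τ β₀ = α`. Applying `τ` to a vanishing sum gives a vanishing sum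
in which `αⁿ` carries the nonzero coefficient `τ (A β₀)` while all other powers are of conjugates
of modulus at most `1`. Hence `‖τ (A β₀)‖ * ‖α‖ⁿ` stays bounded, which only finitely many `n` allow.
-/

open Polynomial

open Filter in
theorem finite_setOf_add_sum_mul_pow_eq_zero {R ι : Type*} [NormedDivisionRing R]
    (s : Finset ι) (c : R) (a b : ι → R) {i₀ : ι} (hi₀ : i₀ ∈ s) (ha : a i₀ ≠ 0)
    (hb₀ : 1 < ‖b i₀‖) (hb : ∀ i ∈ s, i ≠ i₀ → ‖b i‖ ≤ 1) :
    {n : ℕ | c + ∑ i ∈ s, a i * b i ^ n = 0}.Finite := by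
  classical
  have bound : ∀ n, c + ∑ i ∈ s, a i * b i ^ n = 0 →
      ‖a i₀‖ * ‖b i₀‖ ^ n ≤ ‖c‖ + ∑ i ∈ s.erase i₀, ‖a i‖ := by
    intro n hn
    have split : a i₀ * b i₀ ^ n + (c + ∑ i ∈ s.erase i₀, a i * b i ^ n) = 0 := by
      rw [← hn, ← Finset.add_sum_erase s _ hi₀]
      abel
    calc ‖a i₀‖ * ‖b i₀‖ ^ n = ‖c + ∑ i ∈ s.erase i₀, a i * b i ^ n‖ := by
          rw [← norm_pow, ← norm_mul, eq_neg_of_add_eq_zero_left split, norm_neg]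
      _ ≤ ‖c‖ + ∑ i ∈ s.erase i₀, ‖a i‖ * ‖b i‖ ^ n := by
          grw [norm_add_le, norm_sum_le]
          simp only [norm_mul, norm_pow, le_refl]
      _ ≤ ‖c‖ + ∑ i ∈ s.erase i₀, ‖a i‖ := by
          gcongr with i hi
          exact mul_le_of_le_one_right (norm_nonneg _) (pow_le_one₀ (norm_nonneg _)
            (hb i (Finset.mem_of_mem_erase hi) (Finset.ne_of_mem_erase hi)))
  have grows : Tendsto (fun n : ℕ => ‖a i₀‖ * ‖b i₀‖ ^ n) cofinite atTop := by
    rw [Nat.cofinite_eq_atTop]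
    exact (tendsto_pow_atTop_atTop_of_one_lt hb₀).const_mul_atTop (norm_pos_iff.2 ha)
  exact (eventually_cofinite.1 (grows.eventually_gt_atTop _)).subset
    fun n hn => not_lt.2 (bound n hn)

theorem finite_setOf_add_sum_aroots_mul_pow_eq_zero_of_ne_zero (α : ℂ) (habs : 1 < ‖α‖)
    (hconj : ∀ β : ℂ, aeval β (minpoly ℚ α) = 0 → β ≠ α → ‖β‖ ≤ 1)
    (A₀ : ℂ) (A : ℂ → ℂ) (hA₀ : IsAlgebraic ℚ A₀) (hA : ∀ β, IsAlgebraic ℚ (A β))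
    {β₀ : ℂ} (hβ₀ : β₀ ∈ ((minpoly ℚ α).aroots ℂ).toFinset) (hAβ₀ : A β₀ ≠ 0) :
    {n : ℕ | A₀ + ∑ β ∈ ((minpoly ℚ α).aroots ℂ).toFinset, A β * β ^ n = 0}.Finite := by
  classical
  set T := ((minpoly ℚ α).aroots ℂ).toFinset
  set K := algebraicClosure ℚ ℂ
  have hα : IsIntegral ℚ α := minpoly.ne_zero_iff.1 fun h => by simp [T, h] at hβ₀
  have conj_of_mem : ∀ β ∈ T, IsConjRoot ℚ α β := fun β hβ =>
    (isConjRoot_iff_mem_minpoly_aroots hα).2 (Multiset.mem_toFinset.1 hβ)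
  have mem_K : ∀ β ∈ T, β ∈ K := fun β hβ => (conj_of_mem β hβ).isIntegral hα
  let a₀ : K := ⟨A₀, mem_algebraicClosure_iff.2 hA₀⟩
  let a : K → K := fun x => ⟨A x, mem_algebraicClosure_iff.2 (hA x)⟩
  let α' : K := ⟨α, hα⟩
  let β₀' : K := ⟨β₀, mem_K β₀ hβ₀⟩
  obtain ⟨τ, hτ⟩ : ∃ τ : Gal(K/ℚ), τ β₀' = α' :=
    ((isConjRoot_algHom_iff (x := α') (y := β₀') K.val).1
      (conj_of_mem β₀ hβ₀)).exists_algEquiv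
  have conjugate : {n : ℕ | A₀ + ∑ β ∈ T, A β * β ^ n = 0} ⊆
      {n | (τ a₀ : ℂ) + ∑ x ∈ T.subtype (· ∈ K), (τ (a x) : ℂ) * (τ x : ℂ) ^ n = 0} := by
    intro n hn
    have hK : a₀ + ∑ x ∈ T.subtype (· ∈ K), a x * x ^ n = 0 := by
      apply Subtype.ext
      simpa [a₀, a, Finset.sum_subtype_of_mem (fun β => A β * β ^ n) mem_K] using hn
    simpa using congrArg (fun x => (τ x : ℂ)) hK
  refine (finite_setOf_add_sum_mul_pow_eq_zero _ _ _ _ (i₀ := β₀') ?_ ?_ ?_ ?_).subset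
    conjugate
  · exact Finset.mem_subtype.2 hβ₀
  · rw [ne_eq, ZeroMemClass.coe_eq_zero, map_eq_zero_iff _ τ.injective]
    exact fun h => hAβ₀ (congrArg Subtype.val h)
  · rwa [hτ]
  · intro x hx hne
    have hτx : IsConjRoot ℚ α (τ x : ℂ) :=
      (isConjRoot_algHom_iff (x := α') K.val).2
        (((isConjRoot_algHom_iff (x := α') K.val).1
          (conj_of_mem x (Finset.mem_subtype.1 hx))).trans (isConjRoot_of_algEquiv x τ))
    refine hconj _ hτx.aeval_eq_zero fun h => hne (τ.injective ?_)
    rw [hτ]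
    exact Subtype.ext h

theorem finitely_many_vanishing_power_sums_general (α : ℂ)
    (habs : 1 < ‖α‖)
    (hconj : ∀ β : ℂ, Polynomial.aeval β (minpoly ℚ α) = 0 → β ≠ α → ‖β‖ ≤ 1)
    (A₀ : ℂ) (A : ℂ → ℂ) (hA₀ : IsAlgebraic ℚ A₀) (hA : ∀ β, IsAlgebraic ℚ (A β))
    (hne : A₀ ≠ 0 ∨ ∃ β ∈ ((minpoly ℚ α).aroots ℂ).toFinset, A β ≠ 0) :
    {n : ℕ | A₀ + ∑ β ∈ ((minpoly ℚ α).aroots ℂ).toFinset, A β * β ^ n = 0}.Finite := by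
  by_cases h : ∃ β ∈ ((minpoly ℚ α).aroots ℂ).toFinset, A β ≠ 0
  · obtain ⟨β₀, hβ₀, hAβ₀⟩ := h
    exact finite_setOf_add_sum_aroots_mul_pow_eq_zero_of_ne_zero α habs hconj A₀ A hA₀ hA hβ₀ hAβ₀
  · refine Set.finite_empty.subset fun n hn => hne.resolve_right h ?_
    push Not at h
    have hsum : ∑ β ∈ ((minpoly ℚ α).aroots ℂ).toFinset, A β * β ^ n = 0 :=
      Finset.sum_eq_zero fun β hβ => by rw [h β hβ, zero_mul]
    simpa [hsum] using hn

/-- Lemma (lemspv): let `α` be algebraic with `|α| > 1` and all conjugates of `α` other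
than `α` itself of absolute value at most `1` (this covers pseudo-PV and Salem numbers).
Then for algebraic numbers `A₀` and `A_β` (indexed by the conjugates `β` of `α`), not all
zero, there are only finitely many `n` with `A₀ + Σ_β A_β βⁿ = 0`. -/
theorem finitely_many_vanishing_power_sums (α : ℂ) (halg : IsAlgebraic ℚ α)
    (habs : 1 < ‖α‖)
    (hconj : ∀ β : ℂ, Polynomial.aeval β (minpoly ℚ α) = 0 → β ≠ α → ‖β‖ ≤ 1)
    (A₀ : ℂ) (A : ℂ → ℂ) (hA₀ : IsAlgebraic ℚ A₀) (hA : ∀ β, IsAlgebraic ℚ (A β))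
    (hne : A₀ ≠ 0 ∨ ∃ β ∈ ((minpoly ℚ α).aroots ℂ).toFinset, A β ≠ 0) :
    {n : ℕ | A₀ + ∑ β ∈ ((minpoly ℚ α).aroots ℂ).toFinset, A β * β ^ n = 0}.Finite :=
  finitely_many_vanishing_power_sums_general α habs hconj A₀ A hA₀ hA hne
end

section
/- Let α be an algebraic integer of degree d over ℚ with k = ℚ(α), let λ be an element of the complementary module ℤ[α]' = {y ∈ ℚ(α) : Tr_{k/ℚ}(y·ℤ[α]) ⊆ ℤ}, and let b be a positive integer. Then the sequence (Tr_{k/ℚ}(λα^n) mod b)_{n∈ℕ} is ultimately periodic with period length at most b^d. -/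
/-!
Since `α` is a root of its monic integer minimal polynomial `P` of degree `d`, the traces
`Tr(λ αⁿ)` satisfy the integer linear recurrence with characteristic polynomial `P`. Reduced
mod `b`, the window of `d` consecutive terms evolves by a fixed map of `(ℤ/bℤ)^d`, so by
pigeonhole two of the first `b^d + 1` windows coincide, and the sequence is periodic from then on.
-/

open IntermediateField Polynomial

theorem Function.exists_iterate_period_le_card {σ : Type*} [Fintype σ] (f : σ → σ) (x : σ) :
    ∃ p N : ℕ, 0 < p ∧ p ≤ Fintype.card σ ∧ ∀ n, N ≤ n → f^[n + p] x = f^[n] x := by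
  obtain ⟨i, j, hij, hfij⟩ := Fintype.exists_ne_map_eq_of_card_lt
    (fun k : Fin (Fintype.card σ + 1) => f^[k] x) (by simp)
  wlog hlt : i < j generalizing i j
  · exact this j i hij.symm hfij.symm (lt_of_le_of_ne (not_lt.1 hlt) hij.symm)
  refine ⟨j - i, i, by omega, by omega, fun n hn => ?_⟩
  obtain ⟨m, rfl⟩ := Nat.exists_eq_add_of_le hn
  calc f^[i + m + (j - i)] x = f^[m] (f^[j] x) := by
        rw [← Function.iterate_add_apply]; congr 1; omega
    _ = f^[i + m] x := by
        rw [← hfij, ← Function.iterate_add_apply, add_comm]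

namespace LinearRecurrence

variable {R : Type*} [CommSemiring R] {E : LinearRecurrence R} {u : ℕ → R}

def map {S : Type*} [CommSemiring S] (E : LinearRecurrence R) (f : R →+* S) :
    LinearRecurrence S :=
  ⟨E.order, f ∘ E.coeffs⟩

theorem IsSolution.map {S : Type*} [CommSemiring S] (h : E.IsSolution u) (f : R →+* S) :
    (E.map f).IsSolution (f ∘ u) := fun n => by
  change f (u (n + E.order)) = ∑ i, f (E.coeffs i) * f (u (n + i))
  rw [h n, map_sum]
  simp only [map_mul]

theorem IsSolution.tupleSucc_eq (h : E.IsSolution u) (n : ℕ) :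
    E.tupleSucc (fun i : Fin E.order => u (n + i)) = fun i : Fin E.order => u (n + 1 + i) := by
  funext i
  by_cases hi : (i : ℕ) + 1 < E.order
  · simp [tupleSucc, hi, add_assoc, add_comm 1]
  · have : n + 1 + i = n + E.order := by omega
    simp [tupleSucc, hi, this, h n]

theorem IsSolution.iterate_tupleSucc (h : E.IsSolution u) (n : ℕ) :
    E.tupleSucc^[n] (fun i : Fin E.order => u i) = fun i : Fin E.order => u (n + i) := by
  induction n with
  | zero => simp
  | succ n ih => rw [Function.iterate_succ_apply', ih, h.tupleSucc_eq]

theorem IsSolution.exists_period_le_card_pow_order [Fintype R] (h : E.IsSolution u) :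
    ∃ p N : ℕ, 0 < p ∧ p ≤ Fintype.card R ^ E.order ∧ ∀ n, N ≤ n → u (n + p) = u n := by
  rcases Nat.eq_zero_or_pos E.order with hE | hE
  · have hu : ∀ n, u n = 0 := fun n => by
      have : IsEmpty (Fin E.order) := by rw [hE]; exact Fin.isEmpty'
      simpa [hE] using h n
    exact ⟨1, 0, one_pos, by simp [hE], fun n _ => by rw [hu, hu]⟩
  obtain ⟨p, N, hp, hpcard, hper⟩ :=
    Function.exists_iterate_period_le_card E.tupleSucc (fun i => u i)
  refine ⟨p, N, hp, by simpa using hpcard, fun n hn => ?_⟩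
  simpa only [h.iterate_tupleSucc, add_zero] using congrFun (hper n hn) ⟨0, hE⟩

end LinearRecurrence

namespace Polynomial

variable {R : Type*} [CommRing R]

def linearRecurrence (P : R[X]) : LinearRecurrence R :=
  ⟨P.natDegree, fun i => -P.coeff i⟩

theorem Monic.mul_pow_add_natDegree {A : Type*} [Ring A] [Algebra R A] {P : R[X]} (hP : P.Monic)
    {x : A} (hx : aeval x P = 0) (y : A) (n : ℕ) :
    y * x ^ (n + P.natDegree) = ∑ i : Fin P.natDegree, (-P.coeff i) • (y * x ^ (n + i)) := by
  have hxd : x ^ P.natDegree = -∑ i ∈ Finset.range P.natDegree, P.coeff i • x ^ i := by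
    rw [aeval_eq_sum_range, Finset.sum_range_succ, hP.coeff_natDegree, one_smul] at hx
    rwa [eq_neg_iff_add_eq_zero, add_comm]
  rw [pow_add, ← mul_assoc, hxd,
    Fin.sum_univ_eq_sum_range (fun i => (-P.coeff i) • (y * x ^ (n + i)))]
  simp [Finset.mul_sum, pow_add, mul_assoc]

theorem Monic.isSolution_linearRecurrence {S A : Type*} [CommRing S] [Ring A] [Algebra R S]
    [Algebra R A] {P : R[X]} (hP : P.Monic) {x : A} (hx : aeval x P = 0) (φ : A →ₗ[R] S) (y : A)
    {u : ℕ → R} (hinj : Function.Injective (algebraMap R S))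
    (hu : ∀ n, algebraMap R S (u n) = φ (y * x ^ n)) : P.linearRecurrence.IsSolution u := by
  intro n
  apply hinj
  change algebraMap R S (u (n + P.natDegree)) =
    algebraMap R S (∑ i : Fin P.natDegree, -P.coeff i * u (n + i))
  rw [hu, hP.mul_pow_add_natDegree hx, map_sum, map_sum]
  refine Finset.sum_congr rfl fun i _ => ?_
  rw [map_smul, (algebraMap R S).map_mul, hu, Algebra.smul_def]

end Polynomial

theorem trace_sequence_ultimately_periodic_general (α : ℂ) (hint : IsIntegral ℤ α)
    (d : ℕ) (hd : d = (minpoly ℚ α).natDegree)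
    (lam : ℚ⟮α⟯)
    (b : ℕ) (hb : 0 < b)
    (T : ℕ → ℤ)
    (hT : ∀ n : ℕ, (T n : ℚ) =
      Algebra.trace ℚ ℚ⟮α⟯ (lam * (IntermediateField.AdjoinSimple.gen ℚ α) ^ n)) :
    ∃ p N : ℕ, 0 < p ∧ p ≤ b ^ d ∧ ∀ n : ℕ, N ≤ n → T (n + p) ≡ T n [ZMOD (b : ℤ)] := by
  have : NeZero b := ⟨hb.ne'⟩
  have hdeg : (minpoly ℤ α).natDegree = d := by
    rw [hd, minpoly.isIntegrallyClosed_eq_field_fractions' ℚ hint,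
      natDegree_map_eq_of_injective (RingHom.injective_int _)]
  have hgen : aeval (AdjoinSimple.gen ℚ α) (minpoly ℤ α) = 0 :=
    Subtype.val_injective <|
      (aeval_algHom_apply ((IntermediateField.val ℚ⟮α⟯).restrictScalars ℤ) _ _).symm.trans
        (minpoly.aeval ℤ α)
  have hsol : (minpoly ℤ α).linearRecurrence.IsSolution T :=
    (minpoly.monic hint).isSolution_linearRecurrence hgen
      ((Algebra.trace ℚ ℚ⟮α⟯).restrictScalars ℤ) lam (RingHom.injective_int _) hT
  obtain ⟨p, N, hp, hpb, hper⟩ :=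
    (hsol.map (Int.castRingHom (ZMod b))).exists_period_le_card_pow_order
  refine ⟨p, N, hp, ?_, fun n hn => (ZMod.intCast_eq_intCast_iff _ _ b).1 (hper n hn)⟩
  simpa [LinearRecurrence.map, linearRecurrence, ZMod.card, hdeg] using hpb

/-- Lemma 9 (lemper): let `α` be an algebraic integer of degree `d`, `λ ∈ ℤ[α]'` (the
complementary module) and `b ∈ ℕ×`. Then the sequence `Tr_{ℚ(α)/ℚ}(λαⁿ) mod b` is
ultimately periodic with period length at most `b^d`. -/
theorem trace_sequence_ultimately_periodic (α : ℂ) (hint : IsIntegral ℤ α)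
    (d : ℕ) (hd : d = (minpoly ℚ α).natDegree)
    (lam : ℚ⟮α⟯)
    (hlam : ∀ y : ℚ⟮α⟯, (y : ℂ) ∈ Algebra.adjoin ℤ {α} →
      ∃ m : ℤ, Algebra.trace ℚ ℚ⟮α⟯ (lam * y) = (m : ℚ))
    (b : ℕ) (hb : 0 < b)
    (T : ℕ → ℤ)
    (hT : ∀ n : ℕ, (T n : ℚ) =
      Algebra.trace ℚ ℚ⟮α⟯ (lam * (IntermediateField.AdjoinSimple.gen ℚ α) ^ n)) :
    ∃ p N : ℕ, 0 < p ∧ p ≤ b ^ d ∧ ∀ n : ℕ, N ≤ n → T (n + p) ≡ T n [ZMOD (b : ℤ)] :=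
  trace_sequence_ultimately_periodic_general α hint d hd lam b hb T hT
end

section
/- Let α be an algebraic integer that is also a unit (an algebraic unit) of degree d, λ ∈ ℤ[α]' the complementary module, and b a positive integer. Then the sequence (Tr_{k/ℚ}(λα^n) mod b)_{n∈ℕ} is purely periodic; in particular, if p is the length of the period, then Tr_{k/ℚ}(λα^{pn}) ≡ Tr_{k/ℚ}(λ) (mod b) for all n ∈ ℕ. -/
open IntermediateField Polynomial

/-!
Since `α` and `α⁻¹` are both integral, `α⁻¹ ∈ ℤ[α]`, so `α` is a unit of `ℤ[α]` and hence of the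
finite ring `ℤ[α]/bℤ[α]`, which has at most `b ^ d` elements. Its order `p` there satisfies
`α ^ p - 1 ∈ b ℤ[α]`, and multiplying by `λ α ^ n` and taking traces shows that
`Tr(λ α ^ (n + p)) - Tr(λ α ^ n)` is `b` times `Tr(λ y)` for some `y ∈ ℤ[α]`, an integer by the
definition of the complementary module.
-/

theorem mem_adjoin_singleton_of_mul_eq_one {R A : Type*} [CommRing R] [CommRing A] [Algebra R A]
    {x y : A} (hy : IsIntegral R y) (hxy : x * y = 1) : y ∈ Algebra.adjoin R {x} := by
  obtain ⟨f, hf, hfy⟩ := hy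
  have : Invertible y := invertibleOfRightInverse y x (by rwa [mul_comm])
  -- `f.reverse` has constant coefficient `1` and vanishes at `x = y⁻¹`
  have hrev : aeval x f.reverse = 0 := by
    have h := eval₂_reverse_mul_pow (algebraMap R A) y f
    rwa [invOf_eq_left_inv hxy, hfy, (isUnit_of_invertible y).pow _ |>.mul_left_eq_zero] at h
  have hsplit : x * aeval x f.reverse.divX + 1 = 0 := by
    have h := congrArg (aeval x) (X_mul_divX_add f.reverse)
    rwa [coeff_zero_reverse, hf.leadingCoeff, C_1, map_add, map_mul, aeval_X, map_one, hrev] at h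
  have hy : y = -aeval x f.reverse.divX := by
    linear_combination y * hsplit - aeval x f.reverse.divX * hxy
  exact hy ▸ neg_mem (aeval_mem_adjoin_singleton R x)

theorem surjective_quotient_span_natCast_of_span_eq_top {A ι : Type*} [CommRing A] [Fintype ι]
    {v : ι → A} (hv : Submodule.span ℤ (Set.range v) = ⊤) (b : ℕ) [NeZero b] :
    Function.Surjective fun c : ι → ZMod b =>
      Ideal.Quotient.mk (Ideal.span {(b : A)}) (∑ i, ((c i).val : ℤ) • v i) := by
  intro a'
  obtain ⟨a, rfl⟩ := Ideal.Quotient.mk_surjective a'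
  obtain ⟨c, rfl⟩ := (Submodule.mem_span_range_iff_exists_fun ℤ).1 (hv ▸ Submodule.mem_top : a ∈ _)
  refine ⟨fun i => (c i : ZMod b), Ideal.Quotient.eq.2 (Ideal.mem_span_singleton.2 ?_)⟩
  rw [← Finset.sum_sub_distrib]
  refine Finset.dvd_sum fun i _ => ⟨-(c i / b) • v i, ?_⟩
  rw [ZMod.val_intCast, Int.emod_def]
  simp only [zsmul_eq_mul]
  push_cast
  ring

theorem IsUnit.exists_pow_sub_one_mem {A : Type*} [CommRing A] {I : Ideal A} [Finite (A ⧸ I)]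
    {x : A} (hx : IsUnit x) : ∃ p, 0 < p ∧ p ≤ Nat.card (A ⧸ I) ∧ x ^ p - 1 ∈ I := by
  let u := (hx.map (Ideal.Quotient.mk I)).unit
  refine ⟨orderOf u, orderOf_pos u, ?_, ?_⟩
  · rw [← orderOf_units]
    exact orderOf_le_card
  · rw [← Ideal.Quotient.eq, map_pow, map_one]
    exact congrArg Units.val (pow_orderOf_eq_one u)

theorem exists_pow_sub_one_eq_natCast_mul {S : Type*} [CommRing S] [IsDomain S]
    [Module.IsTorsionFree ℤ S] {x y : S} (hx : IsIntegral ℤ x) (hy : IsIntegral ℤ y)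
    (hxy : x * y = 1) (b : ℕ) [NeZero b] :
    ∃ p, 0 < p ∧ p ≤ b ^ (minpoly ℤ x).natDegree ∧
      ∃ z ∈ Algebra.adjoin ℤ {x}, x ^ p - 1 = b * z := by
  let pb := Algebra.adjoin.powerBasis' hx
  set I := Ideal.span {(b : Algebra.adjoin ℤ {x})}
  have hsurj := surjective_quotient_span_natCast_of_span_eq_top pb.basis.span_eq b
  have : Finite (Algebra.adjoin ℤ {x} ⧸ I) := Finite.of_surjective _ hsurj
  have hunit : IsUnit (⟨x, Algebra.self_mem_adjoin_singleton ℤ x⟩ : Algebra.adjoin ℤ {x}) :=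
    IsUnit.of_mul_eq_one (b := ⟨y, mem_adjoin_singleton_of_mul_eq_one hy hxy⟩) (Subtype.ext hxy)
  obtain ⟨p, hp0, hpcard, hmem⟩ := hunit.exists_pow_sub_one_mem (I := I)
  obtain ⟨z, hz⟩ := Ideal.mem_span_singleton'.1 hmem
  refine ⟨p, hp0, hpcard.trans ?_, z, z.2, ?_⟩
  · refine (Nat.card_le_card_of_surjective _ hsurj).trans_eq ?_
    simp [pb]
  · have := congrArg Subtype.val hz
    push_cast at this
    rw [← this, mul_comm]

theorem exists_trace_mul_gen_pow_add_sub_eq {L : Type*} [Field L] [Algebra ℚ L] {α : L}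
    {lam : ℚ⟮α⟯} (hlam : ∀ y : ℚ⟮α⟯, (y : L) ∈ Algebra.adjoin ℤ {α} →
      ∃ m : ℤ, Algebra.trace ℚ ℚ⟮α⟯ (lam * y) = m)
    {p b : ℕ} {z : L} (hz : z ∈ Algebra.adjoin ℤ {α}) (hpz : α ^ p - 1 = b * z) (n : ℕ) :
    ∃ m : ℤ, Algebra.trace ℚ ℚ⟮α⟯ (lam * AdjoinSimple.gen ℚ α ^ (n + p)) -
      Algebra.trace ℚ ℚ⟮α⟯ (lam * AdjoinSimple.gen ℚ α ^ n) = b * m := by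
  have hzK : z ∈ ℚ⟮α⟯ :=
    Algebra.adjoin_le (S := (ℚ⟮α⟯).toSubalgebra.restrictScalars ℤ)
      (Set.singleton_subset_iff.2 (mem_adjoin_simple_self ℚ α)) hz
  set g := AdjoinSimple.gen ℚ α
  have hgp : g ^ p - 1 = b * ⟨z, hzK⟩ := Subtype.ext (by simpa [g] using hpz)
  obtain ⟨m, hm⟩ := hlam (g ^ n * ⟨z, hzK⟩)
    (mul_mem (pow_mem (Algebra.self_mem_adjoin_singleton ℤ α) n) hz)
  refine ⟨m, ?_⟩
  calc Algebra.trace ℚ ℚ⟮α⟯ (lam * g ^ (n + p)) - Algebra.trace ℚ ℚ⟮α⟯ (lam * g ^ n)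
      = Algebra.trace ℚ ℚ⟮α⟯ (b • (lam * (g ^ n * ⟨z, hzK⟩))) := by
        rw [← map_sub, nsmul_eq_mul]
        congr 1
        linear_combination (lam * g ^ n) * hgp
    _ = b * m := by rw [map_nsmul, hm, nsmul_eq_mul]

/-- If moreover `α` is an algebraic unit, the sequence `Tr_{ℚ(α)/ℚ}(λαⁿ) mod b` is purely
periodic; in particular with `p` the period length, `Tr(λα^{pn}) ≡ Tr(λ) (mod b)` for
all `n`. -/
theorem trace_sequence_purely_periodic (α : ℂ) (hα : α ≠ 0)
    (hint : IsIntegral ℤ α) (hunit : IsIntegral ℤ α⁻¹)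
    (d : ℕ) (hd : d = (minpoly ℚ α).natDegree)
    (lam : ℚ⟮α⟯)
    (hlam : ∀ y : ℚ⟮α⟯, (y : ℂ) ∈ Algebra.adjoin ℤ {α} →
      ∃ m : ℤ, Algebra.trace ℚ ℚ⟮α⟯ (lam * y) = (m : ℚ))
    (b : ℕ) (hb : 0 < b)
    (T : ℕ → ℤ)
    (hT : ∀ n : ℕ, (T n : ℚ) =
      Algebra.trace ℚ ℚ⟮α⟯ (lam * (IntermediateField.AdjoinSimple.gen ℚ α) ^ n)) :
    ∃ p : ℕ, 0 < p ∧ p ≤ b ^ d ∧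
      (∀ n : ℕ, T (n + p) ≡ T n [ZMOD (b : ℤ)]) ∧
      (∀ n : ℕ, T (p * n) ≡ T 0 [ZMOD (b : ℤ)]) := by
  have : NeZero b := ⟨hb.ne'⟩
  obtain ⟨p, hp0, hpb, z, hz, hpz⟩ :=
    exists_pow_sub_one_eq_natCast_mul hint hunit (mul_inv_cancel₀ hα) b
  have hdeg : d = (minpoly ℤ α).natDegree := by
    rw [hd, minpoly.isIntegrallyClosed_eq_field_fractions' ℚ hint,
      (minpoly.monic hint).natDegree_map]
  have hmod (n : ℕ) : T (n + p) ≡ T n [ZMOD b] := by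
    obtain ⟨m, hm⟩ := exists_trace_mul_gen_pow_add_sub_eq hlam hz hpz n
    rw [← hT, ← hT] at hm
    exact (Int.modEq_iff_dvd.2 ⟨m, by exact_mod_cast hm⟩).symm
  have hper : Function.Periodic (fun n => (T n : ZMod b)) p := fun n =>
    (ZMod.intCast_eq_intCast_iff _ _ _).2 (hmod n)
  refine ⟨p, hp0, hdeg ▸ hpb, hmod, fun n => ?_⟩
  rw [← ZMod.intCast_eq_intCast_iff, mul_comm]
  exact hper.nat_mul_eq n
end

section
/- Let α be a PV number (Pisot number), k = ℚ(α), and λ ∈ ℚ(α) an element of ℤ[α]'[1/α] = (1/P'_α(α))ℤ[α, 1/α], where P_α is the minimal monic polynomial of α over ℤ. Then ‖λα^n‖ → 0 as n → ∞; that is, (λ, α) ∈ H. -/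
/-!
The roots of `P = minpoly ℤ α` in `ℂ` are simple, and Euler's formula
`∑_β r(β) / P'(β) = coeff_{d-1} (r mod P)` (Lagrange interpolation of `r mod P` at the roots)
shows that for `r = q Xᵐ` this sum is an integer `Nₘ`. If `λ αʲ P'(α) = q(α)`, the term at `β = α`
is `λ αʲ⁺ᵐ`, so `λ αʲ⁺ᵐ - Nₘ` is a fixed linear combination of the `m`-th powers of the other
conjugates, all of which tend to `0`.
-/

open Polynomial Filter

namespace Polynomial

theorem sum_roots_eval_div_eval_derivative {K : Type*} [Field K] [DecidableEq K] {Q : K[X]}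
    (hm : Q.Monic) (hQ : Q.Splits) (hsep : Q.Separable) (r : K[X]) :
    ∑ β ∈ Q.roots.toFinset, r.eval β / Q.derivative.eval β = (r %ₘ Q).coeff (Q.natDegree - 1) := by
  set s := Q.roots.toFinset
  have hnodal : Q = Lagrange.nodal s id := by
    rw [Lagrange.nodal, Finset.prod_eq_multiset_prod, Multiset.toFinset_val,
      (nodup_roots hsep).dedup]
    exact hQ.eq_prod_roots_of_monic hm
  have hcard : s.card = Q.natDegree := by
    rw [Multiset.toFinset_card_of_nodup (nodup_roots hsep), hQ.natDegree_eq_card_roots]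
  have hdeg : (r %ₘ Q).degree < s.card := by
    rw [hcard, ← degree_eq_natDegree hm.ne_zero]
    exact degree_modByMonic_lt r hm
  rw [← hcard, Lagrange.coeff_eq_sum (Set.injOn_id _) hdeg]
  refine Finset.sum_congr rfl fun β hβ => ?_
  have hroot : Q.eval β = 0 := (mem_roots hm.ne_zero).1 (Multiset.mem_toFinset.1 hβ)
  have hmod : (r %ₘ Q).eval β = r.eval β := by
    simp [modByMonic_eq_sub_mul_div r Q, hroot]
  have hder : Q.derivative.eval β = ∏ γ ∈ s.erase β, (β - γ) := by
    rw [hnodal]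
    exact (Lagrange.eval_nodal_derivative_eval_node_eq (v := id) hβ).trans Lagrange.eval_nodal
  simp only [id, hmod, hder]

theorem sum_aroots_aeval_div_aeval_derivative {R K : Type*} [CommRing R] [Field K]
    [DecidableEq K] [Algebra R K] {P : R[X]} (hm : P.Monic)
    (hP : (P.map (algebraMap R K)).Splits) (hsep : (P.map (algebraMap R K)).Separable)
    (r : R[X]) :
    ∑ β ∈ (P.aroots K).toFinset, aeval β r / aeval β (derivative P) =
      algebraMap R K ((r %ₘ P).coeff (P.natDegree - 1)) := by
  have := sum_roots_eval_div_eval_derivative (hm.map (algebraMap R K)) hP hsep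
    (r.map (algebraMap R K))
  simpa only [← map_modByMonic _ hm, coeff_map, hm.natDegree_map, derivative_map,
    eval_map_algebraMap] using this

end Polynomial

theorem minpoly.separable_map_int {L K : Type*} [Field L] [CharZero L] [Field K] [CharZero K]
    {x : L} (hx : IsIntegral ℤ x) : ((minpoly ℤ x).map (algebraMap ℤ K)).Separable := by
  have hQ : minpoly ℚ x = (minpoly ℤ x).map (algebraMap ℤ ℚ) :=
    minpoly.isIntegrallyClosed_eq_field_fractions' ℚ hx
  have := ((minpoly.irreducible hx.tower_top).separable).map (f := algebraMap ℚ K)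
  rwa [hQ, Polynomial.map_map, ← IsScalarTower.algebraMap_eq] at this

theorem tendsto_abs_sub_round_of_sub_eq_sum_pow {x : ℕ → ℝ} {N : ℕ → ℤ} {T : Finset ℂ}
    (c : ℂ → ℂ) (hT : ∀ β ∈ T, ‖β‖ < 1) (hx : ∀ m, (x m : ℂ) - N m = ∑ β ∈ T, c β * β ^ m) :
    Tendsto (fun m => |x m - round (x m)|) atTop (nhds 0) := by
  have hsum : Tendsto (fun m => ∑ β ∈ T, c β * β ^ m) atTop (nhds 0) := by
    simpa using tendsto_finsetSum T fun β hβ =>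
      (tendsto_pow_atTop_nhds_zero_of_norm_lt_one (hT β hβ)).const_mul (c β)
  have hdist : Tendsto (fun m => |x m - N m|) atTop (nhds 0) := by
    simpa [← hx, ← Complex.ofReal_intCast, ← Complex.ofReal_sub] using hsum.norm
  exact squeeze_zero (fun m => abs_nonneg _) (fun m => round_le (x m) (N m)) hdist

theorem Complex.aeval_ofReal_of_int (x : ℝ) (p : ℤ[X]) : aeval (x : ℂ) p = aeval x p :=
  aeval_algHom_apply Complex.ofRealHom.toIntAlgHom x p

theorem ofReal_sub_coeff_modByMonic_eq_sum_aroots_erase [DecidableEq ℂ] {x y : ℝ} {P q : ℤ[X]}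
    (hm : P.Monic) (hsep : (P.map (algebraMap ℤ ℂ)).Separable) (hx : aeval x P = 0)
    (hy : y * aeval x (derivative P) = aeval x q) (m : ℕ) :
    ((y * x ^ m : ℝ) : ℂ) - ((q * X ^ m) %ₘ P).coeff (P.natDegree - 1) =
      ∑ β ∈ (P.aroots ℂ).toFinset.erase (x : ℂ), -(aeval β q / aeval β (derivative P)) * β ^ m := by
  have hroot : aeval (x : ℂ) P = 0 := by
    rw [Complex.aeval_ofReal_of_int, hx, Complex.ofReal_zero]
  have hmem : (x : ℂ) ∈ (P.aroots ℂ).toFinset :=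
    Multiset.mem_toFinset.2 (mem_aroots'.2 ⟨(hm.map _).ne_zero, hroot⟩)
  have hderiv : aeval (x : ℂ) (derivative P) ≠ 0 := by
    have := hsep.aeval_derivative_ne_zero (x := (x : ℂ)) (by rwa [aeval_map_algebraMap])
    rwa [derivative_map, aeval_map_algebraMap] at this
  have hxterm : aeval (x : ℂ) (q * X ^ m) / aeval (x : ℂ) (derivative P) =
      ((y * x ^ m : ℝ) : ℂ) := by
    rw [div_eq_iff hderiv, map_mul, map_pow, aeval_X, Complex.aeval_ofReal_of_int,
      Complex.aeval_ofReal_of_int, ← hy]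
    push_cast
    ring
  have h := sum_aroots_aeval_div_aeval_derivative hm (IsAlgClosed.splits _) hsep (q * X ^ m)
  rw [← Finset.add_sum_erase _ _ hmem, hxterm, eq_intCast] at h
  rw [← h]
  simp only [map_mul, map_pow, aeval_X, Finset.sum_neg_distrib, neg_mul, div_mul_eq_mul_div]
  ring

theorem pisot_complementary_module_in_H_general (α : ℝ)
    (hint : IsIntegral ℤ α)
    (hconj : ∀ β : ℂ, Polynomial.aeval β (minpoly ℤ α) = 0 → β ≠ (α : ℂ) →
      ‖β‖ < 1)
    (lam : ℝ)
    (hlam : ∃ (q : Polynomial ℤ) (j : ℕ),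
      lam * (α ^ j * Polynomial.aeval α (Polynomial.derivative (minpoly ℤ α))) =
        Polynomial.aeval α q) :
    Tendsto (fun n : ℕ => |lam * α ^ n - round (lam * α ^ n)|) atTop (nhds 0) := by
  classical
  obtain ⟨q, j, hq⟩ := hlam
  have hdecomp := ofReal_sub_coeff_modByMonic_eq_sum_aroots_erase (y := lam * α ^ j)
    (minpoly.monic hint) (minpoly.separable_map_int hint) (minpoly.aeval ℤ α) (by rwa [mul_assoc])
  have hsmall : ∀ β ∈ ((minpoly ℤ α).aroots ℂ).toFinset.erase (α : ℂ), ‖β‖ < 1 := by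
    intro β hβ
    obtain ⟨hβα, hβ⟩ := Finset.mem_erase.1 hβ
    exact hconj β (mem_aroots'.1 (Multiset.mem_toFinset.1 hβ)).2 hβα
  rw [← tendsto_add_atTop_iff_nat j]
  simp_rw [pow_add, mul_comm (α ^ _) (α ^ j), ← mul_assoc]
  exact tendsto_abs_sub_round_of_sub_eq_sum_pow _ hsmall hdecomp

/-- If `α` is a PV number and `λ ∈ (1/P'_α(α))ℤ[α, 1/α]` (with `P_α` the minimal monic
polynomial of `α` over `ℤ`), then `‖λαⁿ‖ → 0`, i.e. `(λ, α)` lies in the Hardy set `H`. -/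
theorem pisot_complementary_module_in_H (α : ℝ)
    (hint : IsIntegral ℤ α) (hgt : 1 < α)
    (hconj : ∀ β : ℂ, Polynomial.aeval β (minpoly ℤ α) = 0 → β ≠ (α : ℂ) →
      ‖β‖ < 1)
    (lam : ℝ)
    (hlam : ∃ (q : Polynomial ℤ) (j : ℕ),
      lam * (α ^ j * Polynomial.aeval α (Polynomial.derivative (minpoly ℤ α))) =
        Polynomial.aeval α q) :
    Tendsto (fun n : ℕ => |lam * α ^ n - round (lam * α ^ n)|) atTop (nhds 0) :=
  pisot_complementary_module_in_H_general α hint hconj lam hlam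
end

section
/- Let λ be a nonzero real number, α > 1 real, and s a positive integer. Then: (a) (λ, α) ∈ H if and only if (λα^t, α^s) ∈ H for every 0 ≤ t < s; (b) (λ, α) ∈ M if and only if there exists 0 ≤ t < s such that (λα^t, α^s) ∈ M. Moreover, every pair of algebraic numbers in H lies in M: H ∩ ℚ̄² ⊆ M. -/
open Filter

/-- The Hardy set `H`. -/
def hardySet : Set (ℝ × ℝ) :=
  {p | p.1 ≠ 0 ∧ 1 < p.2 ∧
    Tendsto (fun n : ℕ => |p.1 * p.2 ^ n - round (p.1 * p.2 ^ n)|) atTop (nhds 0)}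

/-- The Mahler set `M`. -/
def mahlerSet : Set (ℝ × ℝ) :=
  {p | p.1 ≠ 0 ∧ 1 < p.2 ∧
    ∃ c : ℝ, 0 < c ∧ c < 1 ∧
      {n : ℕ | |p.1 * p.2 ^ n - round (p.1 * p.2 ^ n)| < c ^ n}.Infinite}

/-!
Write `ε n = λ α ^ n - round (λ α ^ n)`. Along the residue class `n = t + s q` one has
`λ α ^ n = (λ α ^ t) (α ^ s) ^ q`, and the classes `t < s` cover `ℕ`: a sequence tends to `0` iff
it does along every class, and a set of indices is infinite iff it meets some class infinitely.
A rate `c ^ n` becomes `(c ^ s) ^ q`, and conversely a rate `c' ^ q` is beaten by `b ^ n` as soon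
as `c' < b ^ s`.

If `α` is a root of `p ∈ ℤ[X]` and `ε n → 0`, then `∑ pᵢ ε (n + i) = -∑ pᵢ round (λ α ^ (n + i))`
is an integer tending to `0`, hence eventually `0`: `ε` eventually satisfies the linear recurrence
with characteristic polynomial `p`. Over `ℂ`, `p` splits into factors `X - μ`, and a null sequence
`x` whose difference `x (n + 1) - μ x n` decays geometrically decays geometrically itself (by
forward induction if `‖μ‖ < 1`, by summing the tail if `‖μ‖ ≥ 1`). Peeling off the factors one at
a time shows that `ε` decays geometrically.
-/

open Topology Polynomial Asymptotics

namespace Nat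

theorem tendsto_add_mul_atTop {s : ℕ} (hs : 0 < s) (t : ℕ) :
    Tendsto (fun q => t + s * q) atTop atTop :=
  tendsto_atTop_mono (fun q => (Nat.le_mul_of_pos_left q hs).trans (Nat.le_add_left _ t)) tendsto_id

theorem eventually_atTop_iff_forall_residue {s : ℕ} (hs : 0 < s) {p : ℕ → Prop} :
    (∀ᶠ n in atTop, p n) ↔ ∀ t < s, ∀ᶠ q in atTop, p (t + s * q) := by
  refine ⟨fun h t _ => (tendsto_add_mul_atTop hs t).eventually h, fun h => ?_⟩
  obtain ⟨N, hN⟩ := eventually_atTop.mp ((eventually_all_finite (Set.finite_Iio s)).mpr h)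
  refine eventually_atTop.mpr ⟨s * N, fun n hn => ?_⟩
  rw [← mod_add_div n s]
  exact hN (n / s) ((le_div_iff_mul_le hs).mpr (by linarith)) (n % s) (mod_lt n hs)

theorem tendsto_atTop_iff_forall_residue {α : Type*} {s : ℕ} (hs : 0 < s) {f : ℕ → α}
    {l : Filter α} : Tendsto f atTop l ↔ ∀ t < s, Tendsto (fun q => f (t + s * q)) atTop l := by
  simp only [tendsto_iff_eventually]
  exact ⟨fun h t ht p hp => (eventually_atTop_iff_forall_residue hs).mp (h hp) t ht,
    fun h p hp => (eventually_atTop_iff_forall_residue hs).mpr fun t ht => h t ht hp⟩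

theorem frequently_atTop_iff_exists_residue {s : ℕ} (hs : 0 < s) {p : ℕ → Prop} :
    (∃ᶠ n in atTop, p n) ↔ ∃ t < s, ∃ᶠ q in atTop, p (t + s * q) := by
  rw [Filter.Frequently, eventually_atTop_iff_forall_residue hs]
  simp only [not_forall, exists_prop, Filter.Frequently]

end Nat

theorem exists_pow_gt_of_lt_one {c : ℝ} (hc : c < 1) (s : ℕ) : ∃ b, 0 < b ∧ b < 1 ∧ c < b ^ s := by
  have hpow : Tendsto (fun b : ℝ => b ^ s) (𝓝[<] 1) (𝓝 1) := by
    simpa using ((continuous_pow s : Continuous fun b : ℝ => b ^ s).tendsto 1).mono_left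
      nhdsWithin_le_nhds
  obtain ⟨b, hb, hcb⟩ :=
    (Eventually.and (Ioo_mem_nhdsLT one_pos) (hpow.eventually (lt_mem_nhds hc))).exists
  exact ⟨b, hb.1, hb.2, hcb⟩

theorem exists_frequently_lt_pow_iff_exists_residue {f : ℕ → ℝ} {s : ℕ} (hs : 0 < s) :
    (∃ c, 0 < c ∧ c < 1 ∧ ∃ᶠ n in atTop, f n < c ^ n) ↔
      ∃ t < s, ∃ c, 0 < c ∧ c < 1 ∧ ∃ᶠ q in atTop, f (t + s * q) < c ^ q := by
  constructor
  · rintro ⟨c, hc0, hc1, hf⟩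
    obtain ⟨t, ht, hft⟩ := (Nat.frequently_atTop_iff_exists_residue hs).mp hf
    refine ⟨t, ht, c ^ s, pow_pos hc0 s, pow_lt_one₀ hc0.le hc1 hs.ne', hft.mono fun q hq => ?_⟩
    calc f (t + s * q) < c ^ (t + s * q) := hq
      _ = c ^ t * (c ^ s) ^ q := by rw [pow_add, pow_mul]
      _ ≤ (c ^ s) ^ q := mul_le_of_le_one_left (by positivity) (pow_le_one₀ hc0.le hc1.le)
  · rintro ⟨t, -, c', hc'0, hc'1, hf⟩
    obtain ⟨b, hb0, hb1, hc'b⟩ := exists_pow_gt_of_lt_one hc'1 s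
    have hsmall : ∀ᶠ q in atTop, ‖c' ^ q‖ ≤ b ^ t * ‖(b ^ s) ^ q‖ :=
      (isLittleO_pow_pow_of_lt_left hc'0.le hc'b).def (pow_pos hb0 t)
    refine ⟨b, hb0, hb1,
      (Nat.tendsto_add_mul_atTop hs t).frequently ((hf.and_eventually hsmall).mono ?_)⟩
    rintro q ⟨hq, hq'⟩
    rw [Real.norm_of_nonneg (by positivity), Real.norm_of_nonneg (by positivity)] at hq'
    calc f (t + s * q) < c' ^ q := hq
      _ ≤ b ^ t * (b ^ s) ^ q := hq'
      _ = b ^ (t + s * q) := by rw [pow_add, pow_mul]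

section SeqShift

variable {R : Type*} [CommSemiring R]

variable (R) in
/-- `aeval (seqShift R) p` is the difference operator `x ↦ (n ↦ ∑ pᵢ x (n + i))` of the linear
recurrence with characteristic polynomial `p`. -/
def seqShift : Module.End R (ℕ → R) := LinearMap.funLeft R R (· + 1)

theorem seqShift_pow_apply (k : ℕ) (x : ℕ → R) (n : ℕ) : (seqShift R ^ k) x n = x (n + k) := by
  induction k generalizing x with
  | zero => rfl
  | succ k ih => rw [pow_succ, Module.End.mul_apply, ih]; rfl

theorem aeval_seqShift_apply {p : R[X]} {N : ℕ} (hN : p.natDegree < N) (x : ℕ → R) (n : ℕ) :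
    aeval (seqShift R) p x n = ∑ i ∈ Finset.range N, p.coeff i * x (n + i) := by
  simp [aeval_eq_sum_range' hN, seqShift_pow_apply]

theorem aeval_seqShift_X_sub_C {R : Type*} [CommRing R] (μ : R) (x : ℕ → R) :
    aeval (seqShift R) (X - C μ) x = fun n => x (n + 1) - μ * x n := by
  funext n
  rw [aeval_seqShift_apply (N := 2) ((natDegree_X_sub_C_le μ).trans_lt one_lt_two)]
  simp only [coeff_sub, coeff_X, coeff_C, Finset.sum_range_succ, Finset.range_one,
    Finset.sum_singleton, one_ne_zero, ↓reduceIte, zero_sub, add_zero, neg_mul, sub_zero, one_mul]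
  ring

theorem aeval_seqShift_geometric (p : R[X]) (c r : R) :
    aeval (seqShift R) p (fun n => c * r ^ n) = fun n => p.eval r * (c * r ^ n) := by
  funext n
  rw [aeval_seqShift_apply (Nat.lt_succ_self _), eval_eq_sum_range, Finset.sum_mul]
  refine Finset.sum_congr rfl fun i _ => ?_
  ring

theorem aeval_seqShift_map {S : Type*} [CommSemiring S] (f : R →+* S) (p : R[X]) (x : ℕ → R) :
    aeval (seqShift S) (p.map f) (f ∘ x) = f ∘ aeval (seqShift R) p x := by
  funext n
  rw [aeval_seqShift_apply (natDegree_map_le.trans_lt (Nat.lt_succ_self _)), Function.comp_apply,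
    aeval_seqShift_apply (Nat.lt_succ_self _), map_sum]
  simp [coeff_map]

theorem Filter.Tendsto.aeval_seqShift [TopologicalSpace R] [IsTopologicalSemiring R]
    {x : ℕ → R} (hx : Tendsto x atTop (𝓝 0)) (p : R[X]) :
    Tendsto (aeval (seqShift R) p x) atTop (𝓝 0) := by
  have hsum := tendsto_finsetSum (Finset.range (p.natDegree + 1))
    fun i _ => (hx.comp (tendsto_add_atTop_nat i)).const_mul (p.coeff i)
  simp only [mul_zero, Finset.sum_const_zero] at hsum
  exact hsum.congr fun n => (aeval_seqShift_apply (Nat.lt_succ_self _) x n).symm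

end SeqShift

section GeometricDecay

def DecaysGeometrically {E : Type*} [Norm E] (x : ℕ → E) : Prop :=
  ∃ θ ∈ Set.Ioo (0 : ℝ) 1, x =O[atTop] (θ ^ ·)

theorem DecaysGeometrically.exists_eventually_norm_lt_pow {E : Type*} [Norm E] {x : ℕ → E}
    (h : DecaysGeometrically x) : ∃ c, 0 < c ∧ c < 1 ∧ ∀ᶠ n in atTop, ‖x n‖ < c ^ n := by
  obtain ⟨θ, ⟨hθ0, hθ1⟩, hx⟩ := h
  refine ⟨(θ + 1) / 2, by linarith, by linarith, ?_⟩
  have hlo :=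
    hx.trans_isLittleO (isLittleO_pow_pow_of_lt_left hθ0.le (by linarith : θ < (θ + 1) / 2))
  filter_upwards [hlo.def one_half_pos] with n hn
  have hpos : 0 < ((θ + 1) / 2) ^ n := pow_pos (by linarith) n
  rw [Real.norm_of_nonneg hpos.le] at hn
  linarith

variable {𝕜 : Type*} [NormedField 𝕜] {x : ℕ → 𝕜} {μ : 𝕜}

theorem DecaysGeometrically.of_sub_mul_of_norm_lt_one (hμ : ‖μ‖ < 1)
    (h : DecaysGeometrically fun n => x (n + 1) - μ * x n) : DecaysGeometrically x := by
  obtain ⟨θ, ⟨hθ0, hθ1⟩, hy⟩ := h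
  obtain ⟨C, hC, hyC⟩ := hy.exists_pos
  obtain ⟨N, hN⟩ := eventually_atTop.mp hyC.bound
  obtain ⟨ρ, hrρ, hρ1⟩ := exists_between (max_lt hθ1 hμ)
  have hθρ : θ < ρ := (le_max_left _ _).trans_lt hrρ
  have hρ0 : 0 < ρ := hθ0.trans hθρ
  set r := max θ ‖μ‖
  obtain ⟨B, hxB, hCB⟩ : ∃ B, ‖x N‖ ≤ B * ρ ^ N ∧ C ≤ B * (ρ - r) :=
    ⟨max (‖x N‖ / ρ ^ N) (C / (ρ - r)), (div_le_iff₀ (pow_pos hρ0 N)).mp (le_max_left _ _),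
      (div_le_iff₀ (sub_pos.mpr hrρ)).mp (le_max_right _ _)⟩
  have hbound : ∀ n ≥ N, ‖x n‖ ≤ B * ρ ^ n := by
    refine Nat.le_induction hxB fun n hn ih => ?_
    have hy := hN n hn
    rw [norm_pow, Real.norm_of_nonneg hθ0.le] at hy
    calc ‖x (n + 1)‖ = ‖μ * x n + (x (n + 1) - μ * x n)‖ := by ring_nf
      _ ≤ ‖μ‖ * ‖x n‖ + C * θ ^ n := (norm_add_le _ _).trans (by rw [norm_mul]; linarith)
      _ ≤ r * (B * ρ ^ n) + C * ρ ^ n := by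
        gcongr
        · exact le_max_right _ _
      _ ≤ B * ρ ^ (n + 1) := by
        rw [pow_succ]; nlinarith [mul_le_mul_of_nonneg_left hCB (pow_pos hρ0 n).le]
  refine ⟨ρ, ⟨hρ0, hρ1⟩, IsBigO.of_bound B (eventually_atTop.mpr ⟨N, fun n hn => ?_⟩)⟩
  rw [norm_pow, Real.norm_of_nonneg hρ0.le]
  exact hbound n hn

theorem DecaysGeometrically.of_sub_mul_of_one_le_norm (hμ : 1 ≤ ‖μ‖) (hx : Tendsto x atTop (𝓝 0))
    (h : DecaysGeometrically fun n => x (n + 1) - μ * x n) : DecaysGeometrically x := by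
  obtain ⟨θ, ⟨hθ0, hθ1⟩, hy⟩ := h
  obtain ⟨C, hC, hyC⟩ := hy.exists_pos
  obtain ⟨N, hN⟩ := eventually_atTop.mp hyC.bound
  obtain ⟨K, hK0, hK⟩ : ∃ K, 0 < K ∧ K * (1 - θ) = C :=
    ⟨C / (1 - θ), div_pos hC (sub_pos.mpr hθ1), div_mul_cancel₀ _ (sub_pos.mpr hθ1).ne'⟩
  have hstep : ∀ n ≥ N, ‖x n‖ ≤ ‖x (n + 1)‖ + C * θ ^ n := fun n hn => by
    have hy := hN n hn
    rw [norm_pow, Real.norm_of_nonneg hθ0.le] at hy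
    calc ‖x n‖ ≤ ‖μ * x n‖ := by rw [norm_mul]; exact le_mul_of_one_le_left (norm_nonneg _) hμ
      _ = ‖x (n + 1) - (x (n + 1) - μ * x n)‖ := by ring_nf
      _ ≤ ‖x (n + 1)‖ + C * θ ^ n := (norm_sub_le _ _).trans (by linarith)
  have htail : ∀ m, ∀ n ≥ N, ‖x n‖ ≤ ‖x (m + n)‖ + K * θ ^ n := by
    intro m
    induction m with
    | zero => intro n _; simp only [zero_add, le_add_iff_nonneg_right]; positivity
    | succ m ih =>
      intro n hn
      have hnext := ih (n + 1) (by omega)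
      rw [show m + (n + 1) = m + 1 + n by omega] at hnext
      have hgeom : K * θ ^ (n + 1) + C * θ ^ n = K * θ ^ n := by
        linear_combination (-θ ^ n) * hK
      linarith [hstep n hn]
  refine ⟨θ, ⟨hθ0, hθ1⟩, IsBigO.of_bound K (eventually_atTop.mpr ⟨N, fun n hn => ?_⟩)⟩
  have hlim : Tendsto (fun m => ‖x (m + n)‖ + K * θ ^ n) atTop (𝓝 (0 + K * θ ^ n)) :=
    (by simpa using (hx.comp (tendsto_add_atTop_nat n)).norm :
      Tendsto (fun m => ‖x (m + n)‖) atTop (𝓝 0)).add_const _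
  rw [norm_pow, Real.norm_of_nonneg hθ0.le, ← zero_add (K * θ ^ n)]
  exact ge_of_tendsto' hlim fun m => htail m n hn

theorem DecaysGeometrically.of_sub_mul (hx : Tendsto x atTop (𝓝 0))
    (h : DecaysGeometrically fun n => x (n + 1) - μ * x n) : DecaysGeometrically x :=
  (lt_or_ge ‖μ‖ 1).elim h.of_sub_mul_of_norm_lt_one fun hμ => h.of_sub_mul_of_one_le_norm hμ hx

theorem DecaysGeometrically.of_aeval_prod_X_sub_C (s : Multiset 𝕜) (hx : Tendsto x atTop (𝓝 0))
    (h : DecaysGeometrically (aeval (seqShift 𝕜) (s.map (X - C ·)).prod x)) :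
    DecaysGeometrically x := by
  induction s using Multiset.induction_on generalizing x with
  | empty => simpa using h
  | cons μ s ih =>
    rw [Multiset.map_cons, Multiset.prod_cons, mul_comm, map_mul, Module.End.mul_apply] at h
    have hΔ := ih (hx.aeval_seqShift (X - C μ)) h
    rw [aeval_seqShift_X_sub_C] at hΔ
    exact hΔ.of_sub_mul hx

theorem DecaysGeometrically.of_eventually_aeval_eq_zero [IsAlgClosed 𝕜] {p : 𝕜[X]} (hp : p ≠ 0)
    (hx : Tendsto x atTop (𝓝 0)) (h : aeval (seqShift 𝕜) p x =ᶠ[atTop] 0) :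
    DecaysGeometrically x := by
  refine .of_aeval_prod_X_sub_C p.roots hx ⟨1 / 2, ⟨by norm_num, by norm_num⟩, ?_⟩
  rw [← isBigO_const_smul_left (leadingCoeff_ne_zero.mpr hp)]
  have hfactor : ∀ n, p.leadingCoeff • aeval (seqShift 𝕜) (p.roots.map (X - C ·)).prod x n =
      aeval (seqShift 𝕜) p x n := fun n => by
    conv_rhs => rw [← C_leadingCoeff_mul_prod_multiset_X_sub_C (p := p)
      IsAlgClosed.card_roots_eq_natDegree]
    rw [map_mul, aeval_C, Module.End.mul_apply, Module.algebraMap_end_apply]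
    rfl
  simpa only [hfactor] using h.trans_isBigO (isBigO_zero _ _)

end GeometricDecay

theorem eventually_eq_zero_of_tendsto_intCast {w : ℕ → ℤ}
    (h : Tendsto (fun n => (w n : ℝ)) atTop (𝓝 0)) : ∀ᶠ n in atTop, w n = 0 := by
  filter_upwards [h (Metric.ball_mem_nhds 0 one_pos)] with n hn
  rw [Set.mem_preimage, Metric.mem_ball, dist_zero_right, Real.norm_eq_abs, ← Int.cast_abs] at hn
  exact Int.abs_lt_one_iff.mp (by exact_mod_cast hn)

theorem eventually_aeval_seqShift_sub_round_eq_zero {l a : ℝ} {p : ℤ[X]} (hpa : aeval a p = 0)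
    (h : Tendsto (fun n => l * a ^ n - round (l * a ^ n)) atTop (𝓝 0)) :
    aeval (seqShift ℝ) (p.map (algebraMap ℤ ℝ)) (fun n => l * a ^ n - round (l * a ^ n))
      =ᶠ[atTop] 0 := by
  set w := aeval (seqShift ℤ) p fun n => round (l * a ^ n)
  have hsplit : (fun n => l * a ^ n - round (l * a ^ n)) =
      (fun n => l * a ^ n) - algebraMap ℤ ℝ ∘ fun n => round (l * a ^ n) := by
    funext n; simp
  have hw : aeval (seqShift ℝ) (p.map (algebraMap ℤ ℝ)) (fun n => l * a ^ n - round (l * a ^ n)) =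
      -(algebraMap ℤ ℝ ∘ w) := by
    rw [hsplit, map_sub, aeval_seqShift_geometric, aeval_seqShift_map, eval_map_algebraMap, hpa]
    funext n
    simp [w]
  have hwt : Tendsto (fun n => (w n : ℝ)) atTop (𝓝 0) := by
    have hneg := (h.aeval_seqShift (p.map (algebraMap ℤ ℝ))).neg
    rw [hw] at hneg
    simpa using hneg
  filter_upwards [eventually_eq_zero_of_tendsto_intCast hwt] with n hn
  rw [hw]
  simp [hn]

theorem mem_mahlerSet_of_mem_hardySet {l a : ℝ} (h : (l, a) ∈ hardySet) (ha : IsAlgebraic ℚ a) :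
    (l, a) ∈ mahlerSet := by
  obtain ⟨hl, ha1, hε⟩ := h
  obtain ⟨p, hp, hpa⟩ := (IsFractionRing.isAlgebraic_iff ℤ ℚ ℝ).mpr ha
  set ε : ℕ → ℝ := fun n => l * a ^ n - round (l * a ^ n)
  have hε0 : Tendsto ε atTop (𝓝 0) := (tendsto_zero_iff_abs_tendsto_zero ε).mpr hε
  have hdecay : DecaysGeometrically (algebraMap ℝ ℂ ∘ ε) := by
    refine .of_eventually_aeval_eq_zero (p := (p.map (algebraMap ℤ ℝ)).map (algebraMap ℝ ℂ))
      ?_ ?_ ?_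
    · exact (Polynomial.map_ne_zero_iff (algebraMap ℝ ℂ).injective).mpr
        ((Polynomial.map_ne_zero_iff (RingHom.injective_int _)).mpr hp)
    · simpa using (Complex.continuous_ofReal.tendsto 0).comp hε0
    · rw [aeval_seqShift_map]
      filter_upwards [eventually_aeval_seqShift_sub_round_eq_zero hpa hε0] with n hn
      exact (congrArg (algebraMap ℝ ℂ) hn).trans (map_zero _)
  obtain ⟨c, hc0, hc1, hlt⟩ := hdecay.exists_eventually_norm_lt_pow
  refine ⟨hl, ha1, c, hc0, hc1, Nat.frequently_atTop_iff_infinite.mp ?_⟩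
  refine (hlt.mono fun n hn => ?_).frequently
  rwa [Function.comp_apply, norm_algebraMap', Real.norm_eq_abs] at hn

section HardyMahler

variable {lam α : ℝ} {s : ℕ}

theorem mem_hardySet_iff (hlam : lam ≠ 0) (hα : 1 < α) :
    (lam, α) ∈ hardySet ↔
      Tendsto (fun n : ℕ => |lam * α ^ n - round (lam * α ^ n)|) atTop (𝓝 0) :=
  ⟨fun h => h.2.2, fun h => ⟨hlam, hα, h⟩⟩

theorem mem_mahlerSet_iff (hlam : lam ≠ 0) (hα : 1 < α) :
    (lam, α) ∈ mahlerSet ↔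
      ∃ c, 0 < c ∧ c < 1 ∧ ∃ᶠ n in atTop, |lam * α ^ n - round (lam * α ^ n)| < c ^ n := by
  simp only [mahlerSet, Set.mem_ofPred_eq, ← Nat.frequently_atTop_iff_infinite]
  exact ⟨fun h => h.2.2, fun h => ⟨hlam, hα, h⟩⟩

theorem mul_pow_mem_hardySet_iff (hlam : lam ≠ 0) (hα : 1 < α) (hs : 0 < s) (t : ℕ) :
    (lam * α ^ t, α ^ s) ∈ hardySet ↔ Tendsto
      (fun q : ℕ => |lam * α ^ (t + s * q) - round (lam * α ^ (t + s * q))|) atTop (𝓝 0) := by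
  rw [mem_hardySet_iff (mul_ne_zero hlam (pow_ne_zero t (zero_lt_one.trans hα).ne'))
    (one_lt_pow₀ hα hs.ne')]
  simp only [mul_assoc, ← pow_mul, ← pow_add]

theorem mul_pow_mem_mahlerSet_iff (hlam : lam ≠ 0) (hα : 1 < α) (hs : 0 < s) (t : ℕ) :
    (lam * α ^ t, α ^ s) ∈ mahlerSet ↔ ∃ c, 0 < c ∧ c < 1 ∧ ∃ᶠ q in atTop,
      |lam * α ^ (t + s * q) - round (lam * α ^ (t + s * q))| < c ^ q := by
  rw [mem_mahlerSet_iff (mul_ne_zero hlam (pow_ne_zero t (zero_lt_one.trans hα).ne'))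
    (one_lt_pow₀ hα hs.ne')]
  simp only [mul_assoc, ← pow_mul, ← pow_add]

theorem mem_hardySet_iff_forall_residue (hlam : lam ≠ 0) (hα : 1 < α) (hs : 0 < s) :
    (lam, α) ∈ hardySet ↔ ∀ t < s, (lam * α ^ t, α ^ s) ∈ hardySet := by
  simp only [mul_pow_mem_hardySet_iff hlam hα hs]
  exact (mem_hardySet_iff hlam hα).trans (Nat.tendsto_atTop_iff_forall_residue hs)

theorem mem_mahlerSet_iff_exists_residue (hlam : lam ≠ 0) (hα : 1 < α) (hs : 0 < s) :
    (lam, α) ∈ mahlerSet ↔ ∃ t < s, (lam * α ^ t, α ^ s) ∈ mahlerSet := by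
  simp only [mul_pow_mem_mahlerSet_iff hlam hα hs]
  exact (mem_mahlerSet_iff hlam hα).trans (exists_frequently_lt_pow_iff_exists_residue hs)

end HardyMahler

/-- Corollary 14: (a) `(λ,α) ∈ H` iff `(λα^t, α^s) ∈ H` for every `0 ≤ t < s`;
(b) `(λ,α) ∈ M` iff `(λα^t, α^s) ∈ M` for some `0 ≤ t < s`; moreover every pair of
algebraic numbers in `H` lies in `M`. -/
theorem hardy_mahler_power_transfer (lam α : ℝ) (hlam : lam ≠ 0) (hα : 1 < α)
    (s : ℕ) (hs : 0 < s) :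
    ((lam, α) ∈ hardySet ↔ ∀ t : ℕ, t < s → (lam * α ^ t, α ^ s) ∈ hardySet) ∧
    ((lam, α) ∈ mahlerSet ↔ ∃ t : ℕ, t < s ∧ (lam * α ^ t, α ^ s) ∈ mahlerSet) ∧
    (∀ l a : ℝ, (l, a) ∈ hardySet → IsAlgebraic ℚ l → IsAlgebraic ℚ a →
      (l, a) ∈ mahlerSet) :=
  ⟨mem_hardySet_iff_forall_residue hlam hα hs, mem_mahlerSet_iff_exists_residue hlam hα hs,
    fun _ _ h _ ha => mem_mahlerSet_of_mem_hardySet h ha⟩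
end
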